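/- arXiv:1706.05737 — 8 statements merged into one kernel-verified Lean document; each statement's English description precedes it below -/
import Mathlib

section
/- Suppose the uncertainty set U = {h ∈ ℝ^m : h ≥ 0, R h ≤ r} is nonempty. Then the two-stage adjustable robust problem and its dualized reformulation have equal optimal values: z_AR(B) = z_dAR(B). -/
open Matrix MeasureTheory ProbabilityTheory

/-- Optimal value of the two-stage adjustable robust problem. -/
noncomputable def zAR {m n : ℕ} (U : Set (Fin m → ℝ)) (c d : Fin n → ℝ)
    (A B : Matrix (Fin m) (Fin n) ℝ) : EReal :=
  ⨅ x : {x : Fin n → ℝ // 0 ≤ x},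
    ((c ⬝ᵥ (x : Fin n → ℝ) : ℝ) : EReal) +
      ⨆ h : U,
        ⨅ _y : {y : Fin n → ℝ // 0 ≤ y ∧
            (h : Fin m → ℝ) ≤ A *ᵥ (x : Fin n → ℝ) + B *ᵥ y},
          ((d ⬝ᵥ (_y : Fin n → ℝ) : ℝ) : EReal)

/-- Optimal value of the affine-policy problem. -/
noncomputable def zAff {m n : ℕ} (U : Set (Fin m → ℝ)) (c d : Fin n → ℝ)
    (A B : Matrix (Fin m) (Fin n) ℝ) : EReal :=
  ⨅ p : {p : (Fin n → ℝ) × Matrix (Fin n) (Fin m) ℝ × (Fin n → ℝ) //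
      0 ≤ p.1 ∧ ∀ h ∈ U, 0 ≤ p.2.1 *ᵥ h + p.2.2 ∧
        h ≤ A *ᵥ p.1 + B *ᵥ (p.2.1 *ᵥ h + p.2.2)},
    ((c ⬝ᵥ p.1.1 : ℝ) : EReal) +
      ⨆ h : U, ((d ⬝ᵥ (p.1.2.1 *ᵥ (h : Fin m → ℝ) + p.1.2.2) : ℝ) : EReal)

/-- The polyhedral uncertainty set. -/
def polyU {m L : ℕ} (R : Matrix (Fin L) (Fin m) ℝ) (r : Fin L → ℝ) : Set (Fin m → ℝ) :=
  {h | 0 ≤ h ∧ R *ᵥ h ≤ r}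

/-- The dualized uncertainty set. -/
def dualW {m n : ℕ} (B : Matrix (Fin m) (Fin n) ℝ) (d : Fin n → ℝ) : Set (Fin m → ℝ) :=
  {w | 0 ≤ w ∧ Bᵀ *ᵥ w ≤ d}

/-- Optimal value of the dualized adjustable robust problem. -/
noncomputable def zdAR {m n L : ℕ} (c d : Fin n → ℝ) (A B : Matrix (Fin m) (Fin n) ℝ)
    (R : Matrix (Fin L) (Fin m) ℝ) (r : Fin L → ℝ) : EReal :=
  ⨅ x : {x : Fin n → ℝ // 0 ≤ x},
    ((c ⬝ᵥ (x : Fin n → ℝ) : ℝ) : EReal) +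
      ⨆ w : dualW B d,
        ⨅ l : {l : Fin L → ℝ // 0 ≤ l ∧ (w : Fin m → ℝ) ≤ Rᵀ *ᵥ l},
          ((-(A *ᵥ (x : Fin n → ℝ)) ⬝ᵥ (w : Fin m → ℝ) + r ⬝ᵥ (l : Fin L → ℝ) : ℝ) : EReal)

/-- Optimal value of the dualized affine-policy problem. -/
noncomputable def zdAff {m n L : ℕ} (c d : Fin n → ℝ) (A B : Matrix (Fin m) (Fin n) ℝ)
    (R : Matrix (Fin L) (Fin m) ℝ) (r : Fin L → ℝ) : EReal :=
  ⨅ p : {p : (Fin n → ℝ) × Matrix (Fin L) (Fin m) ℝ × (Fin L → ℝ) //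
      0 ≤ p.1 ∧ ∀ w ∈ dualW B d, 0 ≤ p.2.1 *ᵥ w + p.2.2 ∧
        w ≤ Rᵀ *ᵥ (p.2.1 *ᵥ w + p.2.2)},
    ((c ⬝ᵥ p.1.1 : ℝ) : EReal) +
      ⨆ w : dualW B d,
        ((-(A *ᵥ p.1.1) ⬝ᵥ (w : Fin m → ℝ) + r ⬝ᵥ (p.1.2.1 *ᵥ (w : Fin m → ℝ) + p.1.2.2) : ℝ) : EReal)

/-!
For a fixed first-stage decision `x`, strong LP duality turns the second-stage problem
`min {d ⬝ᵥ y : y ≥ 0, B y ≥ h - A x}` into `max {(h - A x) ⬝ᵥ w : w ∈ W}`, and the inner problem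
`min {r ⬝ᵥ λ : λ ≥ 0, Rᵀ λ ≥ w}` of the dualized model into `max {w ⬝ᵥ h : h ∈ U}`; both dual
problems are feasible because `0 ∈ W` and `0 ∈ U`. Hence both models have value
`⨆ h ∈ U, ⨆ w ∈ W, (h - A x) ⬝ᵥ w` at every `x`, the two suprema being taken in either order.

Strong duality, in `EReal` so that infeasible and unbounded problems are covered, comes from
Farkas' lemma: by the conic Carathéodory theorem a finitely generated cone is a finite union of
linear images of closed orthants under injective maps, hence closed, and a point outside a closed
cone is separated from it by a hyperplane.
-/

theorem exists_linearIndepOn_nonneg_sum_eq {𝕜 E ι : Type*} [Field 𝕜] [LinearOrder 𝕜]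
    [IsStrictOrderedRing 𝕜] [AddCommGroup E] [Module 𝕜 E]
    (v : ι → E) (s : Finset ι) (y : ι → 𝕜) (hy : ∀ i ∈ s, 0 ≤ y i) :
    ∃ t ⊆ s, LinearIndepOn 𝕜 v t ∧
      ∃ z : ι → 𝕜, (∀ i ∈ t, 0 ≤ z i) ∧ ∑ i ∈ t, z i • v i = ∑ i ∈ s, y i • v i := by
  classical
  induction s using Finset.strongInduction generalizing y with
  | H s ih =>
  by_cases hli : LinearIndepOn 𝕜 v s
  · exact ⟨s, subset_rfl, hli, y, hy, rfl⟩
  obtain ⟨g, hg, hpos⟩ : ∃ g : ι → 𝕜, ∑ i ∈ s, g i • v i = 0 ∧ (s.filter (0 < g ·)).Nonempty := by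
    obtain ⟨g, hg, i, hi, hgi⟩ := not_linearIndepOn_finset_iff.mp hli
    rcases hgi.lt_or_gt with h | h
    · exact ⟨-g, by simp [neg_smul, hg], i, by simp [hi, h]⟩
    · exact ⟨g, hg, i, by simp [hi, h]⟩
  obtain ⟨j, hj, hjmin⟩ := Finset.exists_min_image _ (fun i => y i / g i) hpos
  rw [Finset.mem_filter] at hj
  -- move along the relation `g` until the first coefficient, the `j`-th, vanishes
  set τ := y j / g j
  have hτ : 0 ≤ τ := div_nonneg (hy j hj.1) hj.2.le
  have hy' : ∀ i ∈ s, 0 ≤ y i - τ * g i := by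
    intro i hi
    rcases le_or_gt (g i) 0 with hgi | hgi
    · nlinarith [hy i hi]
    · have := hjmin i (Finset.mem_filter.mpr ⟨hi, hgi⟩)
      rw [le_div_iff₀ hgi] at this
      linarith
  have hyj : y j - τ * g j = 0 := by simp [τ, hj.2.ne']
  obtain ⟨t, hts, hli, z, hz, hsum⟩ := ih (s.erase j) (Finset.erase_ssubset hj.1)
    (fun i => y i - τ * g i) fun i hi => hy' i (Finset.mem_of_mem_erase hi)
  refine ⟨t, hts.trans (Finset.erase_subset _ _), hli, z, hz, hsum.trans ?_⟩
  rw [Finset.sum_erase s (by simp [hyj])]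
  simp [sub_smul, mul_smul, Finset.sum_sub_distrib, ← Finset.smul_sum, hg]

theorem LinearMap.isClosed_image_nonneg {ι F : Type*} [Fintype ι]
    [AddCommGroup F] [Module ℝ F] [TopologicalSpace F] [IsTopologicalAddGroup F]
    [ContinuousSMul ℝ F] [T2Space F] (f : (ι → ℝ) →ₗ[ℝ] F) :
    IsClosed (f '' {y | 0 ≤ y}) := by
  classical
  set v : ι → F := fun i => f (Pi.single i 1)
  have hf : ∀ y, f y = ∑ i, y i • v i := fun y => by
    conv_lhs => rw [pi_eq_sum_univ' y]
    simp [v, map_sum, map_smul]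
  have hunion : f '' {y | 0 ≤ y} = ⋃ (t : Finset ι) (_ : LinearIndepOn ℝ v t),
      Fintype.linearCombination ℝ (fun i : t => v i) '' {z | 0 ≤ z} := by
    ext x
    simp only [Set.mem_image, Set.mem_iUnion, Set.mem_ofPred_eq]
    constructor
    · rintro ⟨y, hy, rfl⟩
      obtain ⟨t, -, hli, z, hz, hsum⟩ :=
        exists_linearIndepOn_nonneg_sum_eq v Finset.univ y fun i _ => hy i
      refine ⟨t, hli, fun i => z i, fun i => hz i i.2, ?_⟩
      rw [Fintype.linearCombination_apply, hf, ← hsum, Finset.sum_coe_sort t (fun i => z i • v i)]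
    · rintro ⟨t, -, z, hz, rfl⟩
      refine ⟨∑ i : t, z i • Pi.single (i : ι) 1, ?_, ?_⟩
      · exact Finset.sum_nonneg fun i _ => smul_nonneg (hz i) (Pi.single_nonneg.mpr zero_le_one)
      · simp [Fintype.linearCombination_apply, map_sum, map_smul, v]
  rw [hunion]
  refine isClosed_iUnion_of_finite fun t => isClosed_iUnion_of_finite fun hli => ?_
  have hker : LinearMap.ker (Fintype.linearCombination ℝ (fun i : t => v i)) = ⊥ :=
    LinearMap.ker_eq_bot'.mpr fun z hz => funext <| Fintype.linearIndependent_iff.mp hli z <| by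
      rwa [Fintype.linearCombination_apply] at hz
  exact (LinearMap.isClosedEmbedding_of_injective hker).isClosedMap _ isClosed_Ici

namespace Matrix

variable {κ ι : Type*} [Fintype κ] [Fintype ι]

theorem farkas_eq (M : Matrix κ ι ℝ) {b : κ → ℝ} (hb : ∀ y, 0 ≤ y → M *ᵥ y ≠ b) :
    ∃ w, 0 ≤ Mᵀ *ᵥ w ∧ b ⬝ᵥ w < 0 := by
  classical
  let C : ProperCone ℝ (κ → ℝ) :=
    ⟨(PointedCone.positive ℝ (ι → ℝ)).map M.mulVecLin, M.mulVecLin.isClosed_image_nonneg⟩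
  obtain ⟨f, hfC, hfb⟩ := C.hyperplane_separation_point (x₀ := b) fun ⟨y, hy, hyb⟩ => hb y hy hyb
  set w : κ → ℝ := fun j => f (Pi.single j 1)
  have hf : ∀ x, f x = x ⬝ᵥ w := fun x => by
    conv_lhs => rw [pi_eq_sum_univ' x]
    simp [w, map_sum, dotProduct]
  refine ⟨w, fun i => ?_, hf b ▸ hfb⟩
  have := hfC (M *ᵥ Pi.single i 1) ⟨Pi.single i 1, Pi.single_nonneg.mpr zero_le_one, rfl⟩
  rwa [hf, mulVec_single_one] at this

theorem farkas_le (M : Matrix κ ι ℝ) {b : κ → ℝ} (hb : ∀ y, 0 ≤ y → ¬ b ≤ M *ᵥ y) :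
    ∃ u, 0 ≤ u ∧ Mᵀ *ᵥ u ≤ 0 ∧ 0 < b ⬝ᵥ u := by
  classical
  -- `M y ≥ b` with `y ≥ 0` is `M y - s = b` with `y, s ≥ 0`
  obtain ⟨w, hw, hbw⟩ := farkas_eq (fromCols M (-1 : Matrix κ κ ℝ)) (b := b) fun p hp hpb => by
    refine hb (p ∘ Sum.inl) (fun i => hp _) fun j => ?_
    have := congrFun hpb j
    simp only [fromCols_mulVec, Pi.add_apply, neg_mulVec, one_mulVec, Pi.neg_apply,
      Function.comp_apply] at this
    linarith [show 0 ≤ p (Sum.inr j) from hp _]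
  rw [transpose_fromCols, fromRows_mulVec, ← Sum.elim_zero_zero, Sum.elim_le_elim_iff] at hw
  refine ⟨-w, ?_, ?_, ?_⟩
  · simpa [neg_mulVec] using hw.2
  · simpa [mulVec_neg] using hw.1
  · simpa using hbw

theorem weak_duality {M : Matrix κ ι ℝ} {b : κ → ℝ} {d : ι → ℝ} {y : ι → ℝ} {w : κ → ℝ}
    (hy : 0 ≤ y) (hby : b ≤ M *ᵥ y) (hw : 0 ≤ w) (hwd : Mᵀ *ᵥ w ≤ d) :
    b ⬝ᵥ w ≤ d ⬝ᵥ y :=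
  calc b ⬝ᵥ w ≤ (M *ᵥ y) ⬝ᵥ w := dotProduct_le_dotProduct_of_nonneg_right hby hw
    _ = (Mᵀ *ᵥ w) ⬝ᵥ y := by rw [dotProduct_comm, dotProduct_mulVec, mulVec_transpose]
    _ ≤ d ⬝ᵥ y := dotProduct_le_dotProduct_of_nonneg_right hwd hy

theorem exists_primal_le_of_dual_le {M : Matrix κ ι ℝ} {b : κ → ℝ} {d : ι → ℝ} {δ : ℝ}
    (hD : ∃ w, 0 ≤ w ∧ Mᵀ *ᵥ w ≤ d) (hδ : ∀ w, 0 ≤ w → Mᵀ *ᵥ w ≤ d → b ⬝ᵥ w ≤ δ) :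
    ∃ y, 0 ≤ y ∧ b ≤ M *ᵥ y ∧ d ⬝ᵥ y ≤ δ := by
  by_contra! hP
  obtain ⟨u', hu', hMu', hbu'⟩ := farkas_le (fromRows M (replicateRow Unit (-d)))
    (b := Sum.elim b fun _ => -δ) fun y hy hby => by
      rw [fromRows_mulVec, Sum.elim_le_elim_iff] at hby
      have hdy := hby.2 ()
      simp only [replicateRow_mulVec_eq_const, Function.const_apply, neg_dotProduct] at hdy
      linarith [hP y hy hby.1]
  set u := u' ∘ Sum.inl
  set t := u' (Sum.inr ())
  have hu : 0 ≤ u := fun j => hu' _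
  have ht : 0 ≤ t := hu' _
  have hMu : Mᵀ *ᵥ u ≤ t • d := by
    have hcol : (replicateRow Unit (-d))ᵀ *ᵥ (u' ∘ Sum.inr) = -(t • d) := by
      ext i
      simp [mulVec, dotProduct, t, mul_comm]
    rw [transpose_fromRows, fromCols_mulVec, hcol, ← sub_eq_add_neg, sub_nonpos] at hMu'
    exact hMu'
  have hbu : t * δ < b ⬝ᵥ u := by
    have hrow : (fun _ : Unit => -δ) ⬝ᵥ (u' ∘ Sum.inr) = -(t * δ) := by
      simp [dotProduct, t, mul_comm]
    rw [← Sum.elim_comp_inl_inr u', sumElim_dotProduct_sumElim, hrow] at hbu'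
    linarith
  -- `(u + s w₀) / (t + s)` is dual feasible, and beats `δ` once `s > 0` is small
  obtain ⟨w₀, hw₀, hMw₀⟩ := hD
  obtain ⟨s, hs, hsδ⟩ := exists_pos_mul_lt (sub_pos.mpr hbu) (δ - b ⬝ᵥ w₀)
  have hts : 0 < t + s := by linarith
  refine (hδ ((t + s)⁻¹ • (u + s • w₀)) ?_ ?_).not_gt ?_
  · exact smul_nonneg (inv_nonneg.mpr hts.le) (add_nonneg hu (smul_nonneg hs.le hw₀))
  · intro i
    have h1 := hMu i
    have h2 := hMw₀ i
    simp only [mulVec_smul, mulVec_add, Pi.smul_apply, Pi.add_apply, smul_eq_mul] at h1 ⊢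
    rw [inv_mul_le_iff₀ hts]
    nlinarith
  · rw [dotProduct_smul, dotProduct_add, dotProduct_smul, smul_eq_mul, smul_eq_mul,
      lt_inv_mul_iff₀ hts]
    nlinarith

theorem iInf_primal_eq_iSup_dual (M : Matrix κ ι ℝ) (b : κ → ℝ) (d : ι → ℝ)
    (hD : ∃ w, 0 ≤ w ∧ Mᵀ *ᵥ w ≤ d) :
    ⨅ y : {y : ι → ℝ // 0 ≤ y ∧ b ≤ M *ᵥ y}, ((d ⬝ᵥ y.1 : ℝ) : EReal) =
      ⨆ w : {w : κ → ℝ // 0 ≤ w ∧ Mᵀ *ᵥ w ≤ d}, ((b ⬝ᵥ w.1 : ℝ) : EReal) := by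
  refine le_antisymm (EReal.le_of_forall_lt_iff_le.mp fun δ hδ => ?_)
    (iSup_le fun w => le_iInf fun y => EReal.coe_le_coe_iff.mpr <|
      weak_duality y.2.1 y.2.2 w.2.1 w.2.2)
  obtain ⟨y, hy, hby, hdy⟩ := exists_primal_le_of_dual_le hD fun w hw hwd =>
    EReal.coe_le_coe_iff.mp ((le_iSup_of_le ⟨w, hw, hwd⟩ le_rfl).trans hδ.le)
  exact iInf_le_of_le ⟨y, hy, hby⟩ (EReal.coe_le_coe_iff.mpr hdy)

end Matrix

theorem EReal.coe_add_iSup {α : Sort*} (c : ℝ) (g : α → EReal) :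
    (c : EReal) + ⨆ i, g i = ⨆ i, ((c : EReal) + g i) :=
  Monotone.map_iSup_of_continuousAt
    ((EReal.continuousAt_add (Or.inl (EReal.coe_ne_top c)) (Or.inl (EReal.coe_ne_bot c))).comp
      (continuous_const.prodMk continuous_id).continuousAt)
    (fun _ _ h => add_le_add_right h _) (EReal.add_bot c)

theorem EReal.coe_add_iInf {α : Sort*} (c : ℝ) (g : α → EReal) :
    (c : EReal) + ⨅ i, g i = ⨅ i, ((c : EReal) + g i) :=
  Monotone.map_iInf_of_continuousAt
    ((EReal.continuousAt_add (Or.inl (EReal.coe_ne_top c)) (Or.inl (EReal.coe_ne_bot c))).comp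
      (continuous_const.prodMk continuous_id).continuousAt)
    (fun _ _ h => add_le_add_right h _) (EReal.add_top_of_ne_bot (EReal.coe_ne_bot c))

theorem adjustable_eq_dualized_general {m n L : ℕ}
    (c d : Fin n → ℝ) (A B : Matrix (Fin m) (Fin n) ℝ)
    (R : Matrix (Fin L) (Fin m) ℝ) (r : Fin L → ℝ)
    (hd : 0 ≤ d) (hr : 0 ≤ r) :
    zAR (polyU R r) c d A B = zdAR c d A B R r := by
  have hW : ∃ w, 0 ≤ w ∧ Bᵀ *ᵥ w ≤ d := ⟨0, le_rfl, by simpa using hd⟩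
  have hU : ∃ h, 0 ≤ h ∧ Rᵀᵀ *ᵥ h ≤ r := ⟨0, le_rfl, by simpa using hr⟩
  refine iInf_congr fun x => congrArg _ ?_
  calc _ = ⨆ h : polyU R r, ⨆ w : dualW B d, (((h.1 - A *ᵥ x.1) ⬝ᵥ w.1 : ℝ) : EReal) :=
        iSup_congr fun h => calc
          _ = ⨅ y : {y // 0 ≤ y ∧ h.1 - A *ᵥ x.1 ≤ B *ᵥ y}, ((d ⬝ᵥ y.1 : ℝ) : EReal) :=
            (Equiv.subtypeEquivRight fun _ => and_congr_right' sub_le_iff_le_add'.symm).iInf_congr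
              fun _ => rfl
          _ = _ := iInf_primal_eq_iSup_dual B _ d hW
    _ = ⨆ w : dualW B d, ⨆ h : polyU R r, (((h.1 - A *ᵥ x.1) ⬝ᵥ w.1 : ℝ) : EReal) := iSup_comm
    _ = _ := iSup_congr fun w => ?_
  calc ⨆ h : polyU R r, (((h.1 - A *ᵥ x.1) ⬝ᵥ w.1 : ℝ) : EReal)
      = ⨆ h : polyU R r, (((-(A *ᵥ x.1) ⬝ᵥ w.1 : ℝ) : EReal) + ((w.1 ⬝ᵥ h.1 : ℝ) : EReal)) := by
        refine iSup_congr fun h => ?_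
        rw [← EReal.coe_add, sub_dotProduct, dotProduct_comm, sub_eq_neg_add, neg_dotProduct]
    _ = ((-(A *ᵥ x.1) ⬝ᵥ w.1 : ℝ) : EReal) + ⨆ h : polyU R r, ((w.1 ⬝ᵥ h.1 : ℝ) : EReal) :=
        (EReal.coe_add_iSup _ _).symm
    _ = ((-(A *ᵥ x.1) ⬝ᵥ w.1 : ℝ) : EReal) +
          ⨅ l : {l // 0 ≤ l ∧ w.1 ≤ Rᵀ *ᵥ l}, ((r ⬝ᵥ l.1 : ℝ) : EReal) := by
        rw [iInf_primal_eq_iSup_dual Rᵀ w.1 r hU, transpose_transpose]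
        rfl
    _ = _ := EReal.coe_add_iInf _ _

/-- If the uncertainty set `U = {h ≥ 0 | R h ≤ r}` is nonempty, then the
two-stage adjustable robust problem and its dualized reformulation have equal values. -/
theorem adjustable_eq_dualized {m n L : ℕ} (hm : 0 < m) (hn : 0 < n) (hL : 0 < L)
    (c d : Fin n → ℝ) (A B : Matrix (Fin m) (Fin n) ℝ)
    (R : Matrix (Fin L) (Fin m) ℝ) (r : Fin L → ℝ)
    (hc : 0 ≤ c) (hd : 0 ≤ d) (hA : ∀ i j, 0 ≤ A i j) (hB : ∀ i j, 0 ≤ B i j)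
    (hR : ∀ i j, 0 ≤ R i j) (hr : 0 ≤ r)
    (hU : (polyU R r).Nonempty) :
    zAR (polyU R r) c d A B = zdAR c d A B R r :=
  adjustable_eq_dualized_general c d A B R r hd hr
end

section
/- Suppose the uncertainty set U = {h ∈ ℝ^m : h ≥ 0, R h ≤ r} is nonempty and bounded. Then the affine-policy version of the two-stage adjustable robust problem and the affine-policy version of its dualized reformulation have equal optimal values: z_Aff(B) = z_dAff(B). -/
/-!
For a fixed first-stage decision `x`, an affine policy of either problem with worst-case value at
most `t` produces an affine policy of the other problem with the same bound, so the two infima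
agree. Each constraint of a feasible policy is an affine inequality valid on a nonempty polyhedron
(`U`, or `W`, which contains `0` because `d ≥ 0`); by the affine Farkas lemma it is dominated by a
nonnegative combination of the inequalities defining that polyhedron, and these multipliers,
arranged into matrices, are the coefficients of the policy for the other problem. Farkas' lemma
comes from separating a point from a finitely generated cone, which is closed by the conic
Carathéodory theorem.
-/

open Matrix MeasureTheory ProbabilityTheory

section Caratheodory

variable {κ E : Type*} [AddCommGroup E] [Module ℝ E]

theorem exists_nonneg_sum_eq_of_sum_eq_zero {g : κ → E} {s : Finset κ} {c w : κ → ℝ}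
    (hc : ∀ i ∈ s, 0 ≤ c i) (hw : ∑ i ∈ s, w i • g i = 0) (hpos : ∃ i ∈ s, 0 < w i) :
    ∃ i₀ ∈ s, ∃ c' : κ → ℝ, (∀ i ∈ s, 0 ≤ c' i) ∧ c' i₀ = 0 ∧
      ∑ i ∈ s, c' i • g i = ∑ i ∈ s, c i • g i := by
  classical
  obtain ⟨i₀, hi₀, hmin⟩ := (s.filter (0 < w ·)).exists_min_image (fun i => c i / w i)
    (by simpa [Finset.filter_nonempty_iff] using hpos)
  rw [Finset.mem_filter] at hi₀
  -- the largest step `τ` keeping `c - τ • w` nonnegative on `s`; it zeroes the coordinate `i₀`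
  set τ := c i₀ / w i₀
  have hτ : 0 ≤ τ := div_nonneg (hc i₀ hi₀.1) hi₀.2.le
  refine ⟨i₀, hi₀.1, fun i => c i - τ * w i, fun i hi => ?_, ?_, ?_⟩
  · rcases lt_or_ge 0 (w i) with hwi | hwi
    · have := hmin i (Finset.mem_filter.2 ⟨hi, hwi⟩)
      rw [le_div_iff₀ hwi] at this
      linarith
    · nlinarith [hc i hi]
  · simp [τ, div_mul_cancel₀ _ hi₀.2.ne']
  · simp [sub_smul, Finset.sum_sub_distrib, mul_smul, ← Finset.smul_sum, hw]

theorem exists_linearIndepOn_nonneg_sum_eq_s1 (g : κ → E) (s : Finset κ) (c : κ → ℝ)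
    (hc : ∀ i ∈ s, 0 ≤ c i) :
    ∃ t ⊆ s, ∃ c' : κ → ℝ, (∀ i ∈ t, 0 ≤ c' i) ∧ LinearIndepOn ℝ g t ∧
      ∑ i ∈ t, c' i • g i = ∑ i ∈ s, c i • g i := by
  classical
  induction s using Finset.strongInduction generalizing c with
  | _ s ih =>
  by_cases hli : LinearIndepOn ℝ g s
  · exact ⟨s, subset_rfl, c, hc, hli, rfl⟩
  obtain ⟨w, hw, hpos⟩ : ∃ w : κ → ℝ, ∑ i ∈ s, w i • g i = 0 ∧ ∃ i ∈ s, 0 < w i := by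
    obtain ⟨w, hw, i, hi, hwi⟩ := not_linearIndepOn_finset_iff.1 hli
    rcases hwi.lt_or_gt with hwi | hwi
    · exact ⟨-w, by simp [hw], i, hi, by simpa using hwi⟩
    · exact ⟨w, hw, i, hi, hwi⟩
  obtain ⟨i₀, hi₀, c', hc', hc'i₀, hsum⟩ := exists_nonneg_sum_eq_of_sum_eq_zero hc hw hpos
  obtain ⟨t, hts, c'', hc'', hli', hsum'⟩ :=
    ih (s.erase i₀) (Finset.erase_ssubset hi₀) c' fun i hi => hc' i (Finset.mem_of_mem_erase hi)
  refine ⟨t, hts.trans (Finset.erase_subset _ _), c'', hc'', hli', ?_⟩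
  rw [hsum', Finset.sum_erase _ (by simp [hc'i₀]), hsum]

end Caratheodory

theorem isClosed_image_linearCombination_nonneg {κ E : Type*} [Fintype κ] [NormedAddCommGroup E]
    [NormedSpace ℝ E] [FiniteDimensional ℝ E] (g : κ → E) :
    IsClosed (Fintype.linearCombination ℝ g '' Set.Ici 0) := by
  classical
  -- by conic Carathéodory, the cone is a finite union of injective linear images of orthants
  have hcover : Fintype.linearCombination ℝ g '' Set.Ici 0 =
      ⋃ (t : Finset κ) (_ : LinearIndepOn ℝ g t),
        Fintype.linearCombination ℝ (fun i : t => g i) '' Set.Ici 0 := by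
    ext x
    simp only [Set.mem_image, Set.mem_Ici, Set.mem_iUnion, Fintype.linearCombination_apply]
    constructor
    · rintro ⟨c, hc, rfl⟩
      obtain ⟨t, -, c', hc', hli, hsum⟩ :=
        exists_linearIndepOn_nonneg_sum_eq_s1 g Finset.univ c fun i _ => hc i
      exact ⟨t, hli, fun i => c' i, fun i => hc' i i.2,
        by rw [Finset.sum_coe_sort t fun i => c' i • g i, hsum]⟩
    · rintro ⟨t, -, c, hc, rfl⟩
      refine ⟨fun i => if h : i ∈ t then c ⟨i, h⟩ else 0, fun i => ?_, ?_⟩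
      · dsimp only
        split_ifs with h
        exacts [hc _, le_rfl]
      · rw [← Finset.sum_subset t.subset_univ fun i _ hi => by simp [hi], ← Finset.sum_attach t]
        simp
  rw [hcover]
  refine isClosed_iUnion_of_finite fun t => isClosed_iUnion_of_finite fun hli => ?_
  exact (LinearMap.isClosedEmbedding_of_injective (LinearMap.ker_eq_bot.2
    (linearIndependent_iff_injective_fintypeLinearCombination.1 hli))).isClosedMap _ isClosed_Ici

section Farkas

variable {ι κ ρ : Type*} [Fintype ι] [Fintype κ]

theorem exists_nonneg_sum_eq_or_exists_dotProduct_neg (g : κ → ι → ℝ) (z : ι → ℝ) :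
    (∃ c : κ → ℝ, 0 ≤ c ∧ ∑ i, c i • g i = z) ∨
      ∃ y : ι → ℝ, (∀ i, 0 ≤ y ⬝ᵥ g i) ∧ y ⬝ᵥ z < 0 := by
  classical
  rw [or_iff_not_imp_left]
  intro hz
  let C : ProperCone ℝ (ι → ℝ) :=
    ⟨(PointedCone.positive ℝ (κ → ℝ)).map (Fintype.linearCombination ℝ g),
      isClosed_image_linearCombination_nonneg g⟩
  have hC : ∀ x, x ∈ C ↔ ∃ c : κ → ℝ, 0 ≤ c ∧ ∑ i, c i • g i = x := by
    intro x
    change x ∈ PointedCone.map _ _ ↔ _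
    simp [PointedCone.mem_map, PointedCone.mem_positive, Fintype.linearCombination_apply]
  obtain ⟨f, hf, hfz⟩ := C.hyperplane_separation_point (mt (hC z).1 hz)
  set y : ι → ℝ := fun i => f fun j => if i = j then 1 else 0
  have hfy : ∀ v, f v = y ⬝ᵥ v := fun v => by
    simpa [dotProduct, y, mul_comm] using LinearMap.pi_apply_eq_sum_univ (f : (ι → ℝ) →ₗ[ℝ] ℝ) v
  refine ⟨y, fun i => ?_, by rwa [← hfy]⟩
  rw [← hfy]
  exact hf _ ((hC _).2 ⟨Pi.single i 1, by simp, by simp [Pi.single_apply]⟩)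

theorem exists_nonneg_sum_le_or_exists_dotProduct_neg (g : κ → ι → ℝ) (z : ι → ℝ) :
    (∃ c : κ → ℝ, 0 ≤ c ∧ ∑ i, c i • g i ≤ z) ∨
      ∃ y : ι → ℝ, 0 ≤ y ∧ (∀ i, 0 ≤ y ⬝ᵥ g i) ∧ y ⬝ᵥ z < 0 := by
  classical
  rcases exists_nonneg_sum_eq_or_exists_dotProduct_neg (Sum.elim g fun j => Pi.single j 1) z with
    ⟨c, hc, hsum⟩ | ⟨y, hy, hyz⟩
  · refine .inl ⟨fun i => c (.inl i), fun i => hc _, ?_⟩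
    rw [← hsum, Fintype.sum_sum_type]
    simp only [Sum.elim_inl, Sum.elim_inr, le_add_iff_nonneg_right]
    exact Finset.sum_nonneg fun j _ => smul_nonneg (hc _) (Pi.single_nonneg.2 zero_le_one)
  · exact .inr ⟨y, fun j => by simpa using hy (.inr j), fun i => hy (.inl i), hyz⟩

omit [Fintype κ] in
/-- An inequality valid on a nonempty polyhedron is valid on its homogenization. -/
theorem dotProduct_le_mul_of_mulVec_le_smul {M : Matrix κ ι ℝ} {u : κ → ℝ} {a : ι → ℝ} {b : ℝ}
    (hne : ∃ h, 0 ≤ h ∧ M *ᵥ h ≤ u) (hab : ∀ h, 0 ≤ h → M *ᵥ h ≤ u → a ⬝ᵥ h ≤ b)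
    {h : ι → ℝ} {t : ℝ} (hh : 0 ≤ h) (ht : 0 ≤ t) (hMh : M *ᵥ h ≤ t • u) : a ⬝ᵥ h ≤ t * b := by
  obtain ⟨h₀, hh₀, hMh₀⟩ := hne
  have key : ∀ s : ℝ, 0 ≤ s → s * (a ⬝ᵥ h - t * b) ≤ b - a ⬝ᵥ h₀ := by
    intro s hs
    have hpos : 0 < s * t + 1 := by positivity
    have := hab ((s * t + 1)⁻¹ • (s • h + h₀)) (by positivity) ?_
    · rw [dotProduct_smul, dotProduct_add, dotProduct_smul, smul_eq_mul, smul_eq_mul,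
        inv_mul_le_iff₀ hpos] at this
      linarith
    · rw [mulVec_smul, mulVec_add, mulVec_smul, inv_smul_le_iff_of_pos hpos]
      calc s • M *ᵥ h + M *ᵥ h₀ ≤ s • t • u + u :=
            add_le_add (smul_le_smul_of_nonneg_left hMh hs) hMh₀
        _ = (s * t + 1) • u := by rw [add_smul, one_smul, mul_smul]
  by_contra! hlt
  have hδ : 0 < a ⬝ᵥ h - t * b := by linarith
  have := key ((|b - a ⬝ᵥ h₀| + 1) / (a ⬝ᵥ h - t * b)) (by positivity)
  rw [div_mul_cancel₀ _ hδ.ne'] at this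
  linarith [le_abs_self (b - a ⬝ᵥ h₀)]

theorem exists_nonneg_le_vecMul_of_forall_dotProduct_le {M : Matrix κ ι ℝ} {u : κ → ℝ}
    {a : ι → ℝ} {b : ℝ} (hne : ∃ h, 0 ≤ h ∧ M *ᵥ h ≤ u)
    (hab : ∀ h, 0 ≤ h → M *ᵥ h ≤ u → a ⬝ᵥ h ≤ b) :
    ∃ l : κ → ℝ, 0 ≤ l ∧ a ≤ l ᵥ* M ∧ l ⬝ᵥ u ≤ b := by
  -- the coordinate `none` carries the inequality `l ⬝ᵥ u ≤ b`, `some j` the inequality on `a j`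
  rcases exists_nonneg_sum_le_or_exists_dotProduct_neg
      (fun k (o : Option ι) => o.elim (u k) fun j => -M k j) (fun o => o.elim b fun j => -a j) with
    ⟨l, hl, hsum⟩ | ⟨y, hy, hyg, hyz⟩
  · refine ⟨l, hl, fun j => ?_, ?_⟩
    · simpa [Finset.sum_apply, vecMul, dotProduct] using hsum (some j)
    · simpa [Finset.sum_apply, dotProduct] using hsum none
  · refine absurd (dotProduct_le_mul_of_mulVec_le_smul hne hab (fun j => hy (some j)) (hy none)
      fun k => ?_) (not_le.2 ?_)
    · simpa [mulVec, dotProduct, Fintype.sum_option, mul_comm] using hyg k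
    · simpa [dotProduct, Fintype.sum_option, mul_comm] using hyz

theorem exists_nonneg_le_mul_of_forall_mulVec_le {M : Matrix κ ι ℝ} {u : κ → ℝ}
    {C : Matrix ρ ι ℝ} {e : ρ → ℝ} (hne : ∃ h, 0 ≤ h ∧ M *ᵥ h ≤ u)
    (hC : ∀ h, 0 ≤ h → M *ᵥ h ≤ u → C *ᵥ h ≤ e) :
    ∃ Λ : Matrix ρ κ ℝ, (∀ i, 0 ≤ Λ i) ∧ (∀ i, C i ≤ (Λ * M) i) ∧ Λ *ᵥ u ≤ e := by
  choose Λ hΛ hΛM hΛu using fun i =>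
    exists_nonneg_le_vecMul_of_forall_dotProduct_le hne fun h hh hMh => hC h hh hMh i
  exact ⟨Λ, hΛ, hΛM, hΛu⟩

end Farkas

theorem vecMul_nonneg_of_nonneg {ι κ : Type*} [Fintype ι] {w : ι → ℝ} (hw : 0 ≤ w)
    {A : Matrix ι κ ℝ} (hA : ∀ i, 0 ≤ A i) : 0 ≤ w ᵥ* A :=
  fun j => Finset.sum_nonneg fun i _ => mul_nonneg (hw i) (hA i j)

theorem vecMul_le_vecMul_of_nonneg {ι κ : Type*} [Fintype ι] {w : ι → ℝ} (hw : 0 ≤ w)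
    {A B : Matrix ι κ ℝ} (hAB : ∀ i, A i ≤ B i) : w ᵥ* A ≤ w ᵥ* B :=
  fun j => Finset.sum_le_sum fun i _ => mul_le_mul_of_nonneg_left (hAB i j) (hw i)

section AffinePolicy

variable {ι κ ρ : Type*} [Fintype ι] [Fintype κ] [Fintype ρ]

/-- `zAff` optimizes over the policies with data `(M, u, N, a, b, e) = (R, r, B, A x, 0, d)`,
`zdAff` over those with `(Bᵀ, d, Rᵀ, 0, -A x, r)`; the transposed data `(Nᵀ, e, Mᵀ, -b, -a, u)`
exchange the two problems. -/
def IsAffinePolicy (M : Matrix κ ι ℝ) (u : κ → ℝ) (N : Matrix ι ρ ℝ) (a b : ι → ℝ) (e : ρ → ℝ)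
    (t : ℝ) (P : Matrix ρ ι ℝ) (q : ρ → ℝ) : Prop :=
  ∀ h, 0 ≤ h → M *ᵥ h ≤ u →
    0 ≤ P *ᵥ h + q ∧ h ≤ a + N *ᵥ (P *ᵥ h + q) ∧ b ⬝ᵥ h + e ⬝ᵥ (P *ᵥ h + q) ≤ t

theorem isAffinePolicy_transpose_of_certificates [DecidableEq ι] {M : Matrix κ ι ℝ} {u : κ → ℝ}
    {N : Matrix ι ρ ℝ} {a b : ι → ℝ} {e : ρ → ℝ} {t : ℝ} {P : Matrix ρ ι ℝ} {q : ρ → ℝ}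
    {V : Matrix ρ κ ℝ} {Λ : Matrix ι κ ℝ} {μ : κ → ℝ}
    (hV : ∀ i, 0 ≤ V i) (hVM : ∀ i, -P i ≤ (V * M) i) (hVu : V *ᵥ u ≤ q)
    (hΛ : ∀ i, 0 ≤ Λ i) (hΛM : ∀ i, ((1 : Matrix ι ι ℝ) - N * P) i ≤ (Λ * M) i)
    (hΛu : Λ *ᵥ u ≤ a + N *ᵥ q)
    (hμ : 0 ≤ μ) (hμM : b + Pᵀ *ᵥ e ≤ μ ᵥ* M) (hμu : μ ⬝ᵥ u ≤ t - e ⬝ᵥ q) :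
    IsAffinePolicy Nᵀ e Mᵀ (-b) (-a) u t (Λᵀ - Vᵀ * Nᵀ) (μ + Vᵀ *ᵥ e) := by
  intro w hw hNw
  set z := e - Nᵀ *ᵥ w
  have hz : 0 ≤ z := sub_nonneg.2 hNw
  have hpolicy : (Λᵀ - Vᵀ * Nᵀ) *ᵥ w + (μ + Vᵀ *ᵥ e) = w ᵥ* Λ + μ + z ᵥ* V := by
    simp only [z, sub_mulVec, ← mulVec_mulVec, mulVec_transpose, sub_vecMul]
    abel
  rw [hpolicy]
  refine ⟨add_nonneg (add_nonneg (vecMul_nonneg_of_nonneg hw hΛ) hμ)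
    (vecMul_nonneg_of_nonneg hz hV), ?_, ?_⟩
  · have hcover : w + b ≤ Mᵀ *ᵥ (w ᵥ* Λ + μ + z ᵥ* V) := calc
      w + b = w ᵥ* (1 - N * P) + (b + Pᵀ *ᵥ e) + z ᵥ* (-P) := by
        simp only [z, vecMul_sub, vecMul_one, ← vecMul_vecMul, vecMul_neg, sub_vecMul,
          mulVec_transpose]
        abel
      _ ≤ w ᵥ* (Λ * M) + μ ᵥ* M + z ᵥ* (V * M) := by
        gcongr
        · exact vecMul_le_vecMul_of_nonneg hw hΛM
        · exact vecMul_le_vecMul_of_nonneg hz hVM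
      _ = Mᵀ *ᵥ (w ᵥ* Λ + μ + z ᵥ* V) := by
        simp only [mulVec_transpose, add_vecMul, vecMul_vecMul]
    rwa [neg_add_eq_sub, le_sub_iff_add_le]
  · have h1 : u ⬝ᵥ (w ᵥ* Λ) ≤ w ⬝ᵥ a + (Nᵀ *ᵥ w) ⬝ᵥ q := by
      rw [dotProduct_comm, ← dotProduct_mulVec, mulVec_transpose, ← dotProduct_mulVec,
        ← dotProduct_add]
      exact dotProduct_le_dotProduct_of_nonneg_left hΛu hw
    have h2 : u ⬝ᵥ (z ᵥ* V) ≤ e ⬝ᵥ q - (Nᵀ *ᵥ w) ⬝ᵥ q := by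
      rw [dotProduct_comm, ← dotProduct_mulVec, ← sub_dotProduct]
      exact dotProduct_le_dotProduct_of_nonneg_left hVu hz
    rw [dotProduct_add, dotProduct_add, neg_dotProduct, dotProduct_comm u μ, dotProduct_comm a w]
    linarith

theorem IsAffinePolicy.exists_transpose {M : Matrix κ ι ℝ} {u : κ → ℝ} {N : Matrix ι ρ ℝ}
    {a b : ι → ℝ} {e : ρ → ℝ} {t : ℝ} {P : Matrix ρ ι ℝ} {q : ρ → ℝ}
    (hP : IsAffinePolicy M u N a b e t P q) (hne : ∃ h, 0 ≤ h ∧ M *ᵥ h ≤ u) :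
    ∃ (Q : Matrix κ ι ℝ) (s : κ → ℝ), IsAffinePolicy Nᵀ e Mᵀ (-b) (-a) u t Q s := by
  classical
  obtain ⟨V, hV, hVM, hVu⟩ := exists_nonneg_le_mul_of_forall_mulVec_le (C := -P) (e := q) hne
    fun h hh hMh => by
      rw [neg_mulVec]
      exact neg_le_iff_add_nonneg'.2 (hP h hh hMh).1
  obtain ⟨Λ, hΛ, hΛM, hΛu⟩ := exists_nonneg_le_mul_of_forall_mulVec_le
    (C := 1 - N * P) (e := a + N *ᵥ q) hne fun h hh hMh => by
      have := (hP h hh hMh).2.1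
      rw [mulVec_add, mulVec_mulVec] at this
      rw [sub_mulVec, one_mulVec, sub_le_iff_le_add]
      simpa only [add_assoc, add_comm (N *ᵥ q)] using this
  obtain ⟨μ, hμ, hμM, hμu⟩ := exists_nonneg_le_vecMul_of_forall_dotProduct_le
    (a := b + Pᵀ *ᵥ e) (b := t - e ⬝ᵥ q) hne fun h hh hMh => by
      have := (hP h hh hMh).2.2
      rw [dotProduct_add, dotProduct_mulVec] at this
      rw [add_dotProduct, mulVec_transpose]
      linarith
  exact ⟨_, _, isAffinePolicy_transpose_of_certificates hV hVM hVu hΛ hΛM hΛu hμ hμM hμu⟩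

end AffinePolicy

theorem le_coe_add_iSup_of_forall_le {ι : Sort*} [Nonempty ι] {z : EReal} {x : ℝ} {f : ι → ℝ}
    (h : ∀ t : ℝ, (∀ i, f i ≤ t) → z ≤ x + t) : z ≤ x + ⨆ i, (f i : EReal) := by
  induction hS : ⨆ i, (f i : EReal) using EReal.rec with
  | bot =>
    exact absurd hS (ne_bot_of_le_ne_bot (EReal.coe_ne_bot (f (Classical.arbitrary ι)))
      (le_iSup (fun i => (f i : EReal)) _))
  | coe t => exact h t fun i => EReal.coe_le_coe_iff.1 (hS ▸ le_iSup (fun i => (f i : EReal)) i)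
  | top => simp

theorem zAff_le_of_isAffinePolicy {m n L : ℕ} {c d : Fin n → ℝ} {A B : Matrix (Fin m) (Fin n) ℝ}
    {R : Matrix (Fin L) (Fin m) ℝ} {r : Fin L → ℝ} {x : Fin n → ℝ} {P : Matrix (Fin n) (Fin m) ℝ}
    {q : Fin n → ℝ} {t : ℝ} (hx : 0 ≤ x) (hP : IsAffinePolicy R r B (A *ᵥ x) 0 d t P q) :
    zAff (polyU R r) c d A B ≤ ((c ⬝ᵥ x : ℝ) : EReal) + t := by
  refine iInf_le_of_le ⟨(x, P, q), hx, fun h hh => ⟨(hP h hh.1 hh.2).1, (hP h hh.1 hh.2).2.1⟩⟩ ?_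
  gcongr
  exact iSup_le fun h => EReal.coe_le_coe_iff.2 (by simpa using (hP h h.2.1 h.2.2).2.2)

theorem zdAff_le_of_isAffinePolicy {m n L : ℕ} {c d : Fin n → ℝ} {A B : Matrix (Fin m) (Fin n) ℝ}
    {R : Matrix (Fin L) (Fin m) ℝ} {r : Fin L → ℝ} {x : Fin n → ℝ} {Q : Matrix (Fin L) (Fin m) ℝ}
    {s : Fin L → ℝ} {t : ℝ} (hx : 0 ≤ x) (hQ : IsAffinePolicy Bᵀ d Rᵀ 0 (-(A *ᵥ x)) r t Q s) :
    zdAff c d A B R r ≤ ((c ⬝ᵥ x : ℝ) : EReal) + t := by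
  refine iInf_le_of_le ⟨(x, Q, s), hx, fun w hw =>
    ⟨(hQ w hw.1 hw.2).1, by simpa using (hQ w hw.1 hw.2).2.1⟩⟩ ?_
  gcongr
  exact iSup_le fun w => EReal.coe_le_coe_iff.2 (hQ w w.2.1 w.2.2).2.2

theorem affine_eq_dualized_affine_general {m n L : ℕ}
    (c d : Fin n → ℝ) (A B : Matrix (Fin m) (Fin n) ℝ)
    (R : Matrix (Fin L) (Fin m) ℝ) (r : Fin L → ℝ)
    (hd : 0 ≤ d) (hU : (polyU R r).Nonempty) :
    zAff (polyU R r) c d A B = zdAff c d A B R r := by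
  have hW : ∃ w, 0 ≤ w ∧ Bᵀ *ᵥ w ≤ d := ⟨0, le_rfl, by simpa using hd⟩
  have : Nonempty (polyU R r) := hU.to_subtype
  have : Nonempty (dualW B d) := let ⟨w, hw⟩ := hW; ⟨⟨w, hw⟩⟩
  apply le_antisymm
  · refine le_iInf fun ⟨⟨x, Q, s⟩, hx, hQ⟩ => le_coe_add_iSup_of_forall_le fun t ht => ?_
    have hQ' : IsAffinePolicy Bᵀ d Rᵀ 0 (-(A *ᵥ x)) r t Q s := fun w hw hBw =>
      ⟨(hQ w ⟨hw, hBw⟩).1, by simpa using (hQ w ⟨hw, hBw⟩).2, ht ⟨w, hw, hBw⟩⟩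
    obtain ⟨P, q, hP⟩ := hQ'.exists_transpose hW
    exact zAff_le_of_isAffinePolicy hx (by simpa using hP)
  · refine le_iInf fun ⟨⟨x, P, q⟩, hx, hP⟩ => le_coe_add_iSup_of_forall_le fun t ht => ?_
    have hP' : IsAffinePolicy R r B (A *ᵥ x) 0 d t P q := fun h hh hRh =>
      ⟨(hP h ⟨hh, hRh⟩).1, (hP h ⟨hh, hRh⟩).2, by simpa using ht ⟨h, hh, hRh⟩⟩
    obtain ⟨Q, s, hQ⟩ := hP'.exists_transpose hU
    exact zdAff_le_of_isAffinePolicy hx (by simpa using hQ)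

/-- If the uncertainty set `U = {h ≥ 0 | R h ≤ r}` is nonempty and bounded,
then the affine-policy problem and the affine-policy version of its dualized
reformulation have equal optimal values. -/
theorem affine_eq_dualized_affine {m n L : ℕ} (hm : 0 < m) (hn : 0 < n) (hL : 0 < L)
    (c d : Fin n → ℝ) (A B : Matrix (Fin m) (Fin n) ℝ)
    (R : Matrix (Fin L) (Fin m) ℝ) (r : Fin L → ℝ)
    (hc : 0 ≤ c) (hd : 0 ≤ d) (hA : ∀ i j, 0 ≤ A i j) (hB : ∀ i j, 0 ≤ B i j)
    (hR : ∀ i j, 0 ≤ R i j) (hr : 0 ≤ r)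
    (hU : (polyU R r).Nonempty) (hUbdd : Bornology.IsBounded (polyU R r)) :
    zAff (polyU R r) c d A B = zdAff c d A B R r :=
  affine_eq_dualized_affine_general c d A B R r hd hU
end

section
/- Suppose the dualized uncertainty set W = {w ∈ ℝ^m : w ≥ 0, Bᵀw ≤ d} is a simplex, i.e., W = conv({0, w¹, …, w^m}) for some linearly independent vectors w¹, …, w^m ∈ ℝ^m with nonnegative entries, and suppose U is nonempty. Then affine policies are optimal for the dualized adjustable problem: z_dAff(B) = z_dAR(B). -/
open Matrix MeasureTheory ProbabilityTheory

/-!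
For a fixed first stage `x`, the feasible pairs `(w, λ)` of the dualized recourse problem with
objective at most `M` form a convex set. Given `M` above the inner supremum and `0, w¹, …, wᵐ`
affinely independent, recourse choices `λ⁰, λ¹, …, λᵐ` with objective below `M` at the vertices
of the simplex `W` are interpolated by an affine policy `w ↦ Q w + s`, and convexity keeps the
interpolated pairs feasible with objective at most `M` on all of `W = conv {0, w¹, …, wᵐ}`.
The reverse inequality holds for any `W`, an affine policy being one particular choice of `λ`
for each `w`.
-/

section AffineSelection

variable {𝕜 ι m k : Type*} [Field 𝕜] [Fintype m] [DecidableEq m]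

theorem exists_mulVec_eq_of_linearIndependent {w : ι → m → 𝕜} (hw : LinearIndependent 𝕜 w)
    (y : ι → k → 𝕜) : ∃ Q : Matrix k m 𝕜, ∀ i, Q *ᵥ w i = y i := by
  obtain ⟨g, hg⟩ := LinearMap.exists_extend ((Finsupp.linearCombination 𝕜 y).comp hw.repr)
  refine ⟨LinearMap.toMatrix' g, fun i => ?_⟩
  rw [← Matrix.toLin'_apply, Matrix.toLin'_toMatrix']
  have := congr($hg ⟨w i, Submodule.subset_span (Set.mem_range_self i)⟩)
  rwa [LinearMap.comp_apply, LinearMap.comp_apply, hw.repr_eq_single i _ rfl,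
    Finsupp.linearCombination_single, one_smul] at this

variable [LinearOrder 𝕜] [IsStrictOrderedRing 𝕜]

theorem exists_affine_selection_of_linearIndependent {w : ι → m → 𝕜}
    (hw : LinearIndependent 𝕜 w) {C : Set ((m → 𝕜) × (k → 𝕜))} (hC : Convex 𝕜 C)
    {y₀ : k → 𝕜} (hy₀ : (0, y₀) ∈ C) {y : ι → k → 𝕜} (hy : ∀ i, (w i, y i) ∈ C) :
    ∃ (Q : Matrix k m 𝕜) (s : k → 𝕜),
      ∀ v ∈ convexHull 𝕜 (insert 0 (Set.range w)), (v, Q *ᵥ v + s) ∈ C := by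
  obtain ⟨Q, hQ⟩ := exists_mulVec_eq_of_linearIndependent hw (fun i => y i - y₀)
  refine ⟨Q, y₀, convexHull_min (t := {v | (v, Q *ᵥ v + y₀) ∈ C}) ?_ ?_⟩
  · rintro v (rfl | ⟨i, rfl⟩)
    · simpa using hy₀
    · simpa [hQ] using hy i
  · intro v₁ h₁ v₂ h₂ a b ha hb hab
    have hpair : (a • v₁ + b • v₂, Q *ᵥ (a • v₁ + b • v₂) + y₀)
        = a • (v₁, Q *ᵥ v₁ + y₀) + b • (v₂, Q *ᵥ v₂ + y₀) := by
      ext1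
      · rfl
      · simp only [Prod.snd_add, Prod.smul_snd, mulVec_add, mulVec_smul]
        linear_combination (norm := module) -(hab • y₀)
    rw [Set.mem_ofPred_eq, hpair]
    exact hC h₁ h₂ ha hb hab

end AffineSelection

section DualRecourse

variable {m k : Type*} [Fintype m] [Fintype k]

def dualSublevel (R : Matrix k m ℝ) (r : k → ℝ) (a : m → ℝ) (M : ℝ) :
    Set ((m → ℝ) × (k → ℝ)) :=
  {p | 0 ≤ p.2 ∧ p.1 ≤ Rᵀ *ᵥ p.2 ∧ a ⬝ᵥ p.1 + r ⬝ᵥ p.2 ≤ M}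

theorem convex_dualSublevel (R : Matrix k m ℝ) (r : k → ℝ) (a : m → ℝ) (M : ℝ) :
    Convex ℝ (dualSublevel R r a M) := by
  rintro ⟨v₁, y₁⟩ ⟨hy₁, hv₁, hM₁⟩ ⟨v₂, y₂⟩ ⟨hy₂, hv₂, hM₂⟩ s t hs ht hst
  simp only [Prod.smul_mk, Prod.mk_add_mk, dualSublevel, Set.mem_ofPred_eq, mulVec_add,
    mulVec_smul, dotProduct_add, dotProduct_smul, smul_eq_mul] at *
  refine ⟨by positivity, add_le_add (smul_le_smul_of_nonneg_left hv₁ hs)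
    (smul_le_smul_of_nonneg_left hv₂ ht), ?_⟩
  linear_combination s * hM₁ + t * hM₂ + M * hst

noncomputable def dualValue (R : Matrix k m ℝ) (r : k → ℝ) (a v : m → ℝ) : EReal :=
  ⨅ y : {y : k → ℝ // 0 ≤ y ∧ v ≤ Rᵀ *ᵥ y}, ((a ⬝ᵥ v + r ⬝ᵥ (y : k → ℝ) : ℝ) : EReal)

theorem exists_mem_dualSublevel_of_dualValue_lt {R : Matrix k m ℝ} {r : k → ℝ} {a v : m → ℝ}
    {M : ℝ} (h : dualValue R r a v < M) : ∃ y, (v, y) ∈ dualSublevel R r a M := by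
  obtain ⟨⟨y, hy, hv⟩, hlt⟩ := iInf_lt_iff.1 h
  exact ⟨y, hy, hv, (EReal.coe_lt_coe_iff.1 hlt).le⟩

end DualRecourse

section OptimalValues

variable {m n L : ℕ} (c d : Fin n → ℝ) (A B : Matrix (Fin m) (Fin n) ℝ)
  (R : Matrix (Fin L) (Fin m) ℝ) (r : Fin L → ℝ)

theorem zdAR_eq : zdAR c d A B R r = ⨅ x : {x : Fin n → ℝ // 0 ≤ x},
    ((c ⬝ᵥ (x : Fin n → ℝ) : ℝ) : EReal) + ⨆ v : dualW B d, dualValue R r (-(A *ᵥ x)) v :=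
  rfl

theorem zdAR_le_zdAff : zdAR c d A B R r ≤ zdAff c d A B R r := by
  refine le_iInf fun ⟨⟨x, Q, s⟩, hx, hQ⟩ => ?_
  rw [zdAR_eq]
  refine (iInf_le _ ⟨x, hx⟩).trans (add_le_add_right (iSup_mono fun v => ?_) _)
  exact iInf_le_of_le ⟨Q *ᵥ v + s, hQ v.1 v.2⟩ le_rfl

variable {c d A B R r}

theorem zdAff_le_of_policy {x : Fin n → ℝ} (hx : 0 ≤ x) {M : ℝ} (Q : Matrix (Fin L) (Fin m) ℝ)
    (s : Fin L → ℝ) (hQ : ∀ v ∈ dualW B d, (v, Q *ᵥ v + s) ∈ dualSublevel R r (-(A *ᵥ x)) M) :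
    zdAff c d A B R r ≤ ((c ⬝ᵥ x : ℝ) : EReal) + M := by
  have hfeas : ∀ v ∈ dualW B d, 0 ≤ Q *ᵥ v + s ∧ v ≤ Rᵀ *ᵥ (Q *ᵥ v + s) :=
    fun v hv => ⟨(hQ v hv).1, (hQ v hv).2.1⟩
  rw [zdAff]
  refine iInf_le_of_le ⟨(x, Q, s), hx, hfeas⟩ (add_le_add_right (iSup_le fun v => ?_) _)
  exact EReal.coe_le_coe_iff.2 (hQ v.1 v.2).2.2

theorem zdAff_le_zdAR_of_eq_convexHull {w : Fin m → Fin m → ℝ} (hw : LinearIndependent ℝ w)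
    (hW : dualW B d = convexHull ℝ (insert 0 (Set.range w))) :
    zdAff c d A B R r ≤ zdAR c d A B R r := by
  rw [zdAR_eq]
  refine le_iInf fun x => EReal.le_of_forall_lt_iff_le.1 fun z hz => ?_
  have hlt : ∀ v ∈ dualW B d, dualValue R r (-(A *ᵥ x)) v < ((z - c ⬝ᵥ x : ℝ) : EReal) := by
    intro v hv
    refine (le_iSup (fun v : dualW B d => dualValue R r (-(A *ᵥ x)) v) ⟨v, hv⟩).trans_lt ?_
    rwa [EReal.coe_sub, EReal.lt_sub_iff_add_lt (.inl (EReal.coe_ne_bot _))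
      (.inl (EReal.coe_ne_top _)), add_comm]
  have hvert : insert 0 (Set.range w) ⊆ dualW B d := hW ▸ subset_convexHull ℝ _
  obtain ⟨y₀, hy₀⟩ :=
    exists_mem_dualSublevel_of_dualValue_lt (hlt 0 (hvert (Set.mem_insert _ _)))
  choose y hy using fun i => exists_mem_dualSublevel_of_dualValue_lt
    (hlt (w i) (hvert (Set.mem_insert_of_mem _ (Set.mem_range_self i))))
  obtain ⟨Q, s, hQ⟩ :=
    exists_affine_selection_of_linearIndependent hw (convex_dualSublevel _ _ _ _) hy₀ hy
  calc zdAff c d A B R r ≤ ((c ⬝ᵥ x : ℝ) : EReal) + ((z - c ⬝ᵥ x : ℝ) : EReal) :=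
        zdAff_le_of_policy x.2 Q s (hW ▸ hQ)
    _ = z := by rw [← EReal.coe_add, add_sub_cancel]

end OptimalValues

theorem dualized_affine_optimal_of_simplex_general {m n L : ℕ}
    (c d : Fin n → ℝ) (A B : Matrix (Fin m) (Fin n) ℝ)
    (R : Matrix (Fin L) (Fin m) ℝ) (r : Fin L → ℝ)
    (w : Fin m → (Fin m → ℝ)) (hw_indep : LinearIndependent ℝ w)
    (hW_simplex : dualW B d = convexHull ℝ (insert 0 (Set.range w))) :
    zdAff c d A B R r = zdAR c d A B R r :=
  (zdAff_le_zdAR_of_eq_convexHull hw_indep hW_simplex).antisymm (zdAR_le_zdAff c d A B R r)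

/-- If the dualized uncertainty set `W = {w ≥ 0 | Bᵀ w ≤ d}` is a simplex,
i.e. the convex hull of `0` together with `m` linearly independent nonnegative vectors,
and `U` is nonempty, then affine policies are optimal for the dualized adjustable
problem: `z_dAff(B) = z_dAR(B)`. -/
theorem dualized_affine_optimal_of_simplex {m n L : ℕ} (hm : 0 < m) (hn : 0 < n) (hL : 0 < L)
    (c d : Fin n → ℝ) (A B : Matrix (Fin m) (Fin n) ℝ)
    (R : Matrix (Fin L) (Fin m) ℝ) (r : Fin L → ℝ)
    (hc : 0 ≤ c) (hd : 0 ≤ d) (hA : ∀ i j, 0 ≤ A i j) (hB : ∀ i j, 0 ≤ B i j)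
    (hR : ∀ i j, 0 ≤ R i j) (hr : 0 ≤ r)
    (hU : (polyU R r).Nonempty)
    (w : Fin m → (Fin m → ℝ)) (hw_indep : LinearIndependent ℝ w)
    (hw_nonneg : ∀ i, 0 ≤ w i)
    (hW_simplex : dualW B d = convexHull ℝ (insert 0 (Set.range w))) :
    zdAff c d A B R r = zdAR c d A B R r :=
  dualized_affine_optimal_of_simplex_general c d A B R r w hw_indep hW_simplex
end

section
/- Let b > 0, μ ∈ (0, b], d̄ > 0, m ≥ 2, n ≥ 1, and suppose the entries B̃_ij of the random matrix B̃ are i.i.d. real random variables taking values in [0, b] with mean μ. Suppose d = d̄·e (e the all-ones vector in ℝ^n), U = {h ∈ ℝ^m : h ≥ 0, R h ≤ r} is nonempty and bounded, and ε := (b/μ)·√((log m)/n) satisfies ε < 1. Then with probability at least 1 − 1/m, z_AR(B̃) ≤ z_Aff(B̃) ≤ (b/(μ(1−ε)))·z_AR(B̃). -/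
open Matrix MeasureTheory ProbabilityTheory

/-! If every row of `B` sums to at least `n σ` and `Bᵢⱼ ≤ b`, then for each first-stage decision `x`
the worst-case recourse cost `W(x)` bounds every shortfall `hᵢ - (A x)ᵢ` over `h ∈ U` by
`(b / d̄) W(x)`. The static second stage `y ≡ (b / d̄) W(x) / (n σ)` is then feasible for all of
`U` and costs `(b / σ) W(x)`, so `z_Aff ≤ (b / σ) z_AR`. By Hoeffding's inequality a row sum of `B̃`
falls below `n μ (1 - ε)` with probability at most `m⁻²`, and a union bound over the `m` rows
gives this with `σ = μ (1 - ε)` with probability at least `1 - 1/m`. -/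

section Hoeffding

variable {Ω : Type*} [MeasurableSpace Ω] {P : Measure Ω} [IsProbabilityMeasure P]

lemma measureReal_sum_le_sub_le_of_mem_Icc {ι : Type*} [Fintype ι] {X : ι → Ω → ℝ}
    (h_indep : iIndepFun X P) (h_meas : ∀ j, AEMeasurable (X j) P) {a b μ : ℝ}
    (h_bdd : ∀ j, ∀ᵐ ω ∂P, X j ω ∈ Set.Icc a b)
    (h_mean : ∀ j, P[X j] = μ) {t : ℝ} (ht : 0 ≤ t) :
    P.real {ω | ∑ j, X j ω ≤ Fintype.card ι * μ - t} ≤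
      Real.exp (-2 * t ^ 2 / (Fintype.card ι * (b - a) ^ 2)) := by
  have h_subG : ∀ j ∈ (Finset.univ : Finset ι),
      HasSubgaussianMGF (fun ω => μ - X j ω) ((‖b - a‖₊ / 2) ^ 2) P := fun j _ => by
    convert (hasSubgaussianMGF_of_mem_Icc (h_meas j) (h_bdd j)).neg using 1
    ext ω; simp [h_mean j]
  have h_indep' : iIndepFun (fun j ω => μ - X j ω) P :=
    h_indep.comp (fun _ x => μ - x) fun _ => by fun_prop
  have h := HasSubgaussianMGF.measure_sum_ge_le_of_iIndepFun h_indep' h_subG ht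
  convert h using 2
  · ext ω
    simp only [Set.mem_ofPred_eq, Finset.sum_sub_distrib, Finset.sum_const, Finset.card_univ,
      nsmul_eq_mul]
    constructor <;> intro hω <;> linarith
  · simp only [Finset.sum_const, Finset.card_univ, nsmul_eq_mul]
    push_cast
    rw [Real.norm_eq_abs, div_pow, sq_abs,
      show (2 : ℝ) * (Fintype.card ι * ((b - a) ^ 2 / 2 ^ 2)) = Fintype.card ι * (b - a) ^ 2 / 2 by
        ring, div_div_eq_mul_div]
    ring

lemma measureReal_sum_le_mul_one_sub_le {m n : ℕ} (hm : 1 ≤ m) (hn : 1 ≤ n) {X : Fin n → Ω → ℝ}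
    (h_indep : iIndepFun X P) (h_meas : ∀ j, Measurable (X j)) {b μ : ℝ} (hb : 0 < b)
    (hμ : 0 < μ) (h_bdd : ∀ j ω, X j ω ∈ Set.Icc 0 b) (h_mean : ∀ j, P[X j] = μ) {ε : ℝ}
    (hε : ε = (b / μ) * Real.sqrt (Real.log m / n)) :
    P.real {ω | ∑ j, X j ω ≤ n * (μ * (1 - ε))} ≤ ((m : ℝ) ^ 2)⁻¹ := by
  have hm0 : (0 : ℝ) < m := by exact_mod_cast hm
  have hn0 : (0 : ℝ) < n := by exact_mod_cast hn
  have hε0 : 0 ≤ ε := hε ▸ by positivity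
  have hε_sq : ε ^ 2 = (b / μ) ^ 2 * (Real.log m / n) := by
    rw [hε, mul_pow, Real.sq_sqrt (div_nonneg (Real.log_natCast_nonneg m) hn0.le)]
  have h := measureReal_sum_le_sub_le_of_mem_Icc h_indep (fun j => (h_meas j).aemeasurable)
    (fun j => ae_of_all _ (h_bdd j)) h_mean (t := n * μ * ε) (by positivity)
  rw [Fintype.card_fin] at h
  calc P.real {ω | ∑ j, X j ω ≤ n * (μ * (1 - ε))}
      = P.real {ω | ∑ j, X j ω ≤ n * μ - n * μ * ε} := by ring_nf
    _ ≤ Real.exp (-2 * (n * μ * ε) ^ 2 / (n * (b - 0) ^ 2)) := h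
    _ = Real.exp (-Real.log ((m : ℝ) ^ 2)) := by
        rw [Real.log_pow, sub_zero, mul_pow, hε_sq]
        congr 1
        field_simp
        push_cast
        ring
    _ = ((m : ℝ) ^ 2)⁻¹ := by rw [Real.exp_neg, Real.exp_log (by positivity)]

lemma ofReal_one_sub_card_mul_le_measure_iInter_compl {ι : Type*} [Fintype ι]
    {E : ι → Set Ω} {δ : ℝ} (hE : ∀ i, P.real (E i) ≤ δ) :
    ENNReal.ofReal (1 - Fintype.card ι * δ) ≤ P (⋂ i, (E i)ᶜ) := by
  rw [← Set.compl_iUnion, ENNReal.ofReal_le_iff_le_toReal (measure_ne_top _ _)]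
  have h_univ : 1 ≤ P.real (⋃ i, E i) + P.real (⋃ i, E i)ᶜ := by
    simpa [measureReal_def, ENNReal.toReal_add] using
      ENNReal.toReal_mono (by finiteness) (measure_univ_le_add_compl (μ := P) (⋃ i, E i))
  have h_union : P.real (⋃ i, E i) ≤ Fintype.card ι * δ :=
    (measureReal_iUnion_fintype_le E).trans ((Finset.sum_le_sum fun i _ => hE i).trans_eq (by simp))
  rw [← measureReal_def]
  linarith

end Hoeffding

theorem EReal.coe_mul_iInf_of_pos {ι : Sort*} {k : ℝ} (hk : 0 < k) (g : ι → EReal) :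
    (k : EReal) * ⨅ i, g i = ⨅ i, (k : EReal) * g i := by
  refine Monotone.map_iInf_of_continuousAt (f := fun z => (k : EReal) * z) ?_
    (fun _ _ h => mul_le_mul_of_nonneg_left h (by exact_mod_cast hk.le))
    (EReal.coe_mul_top_of_pos hk)
  have hk0 : (k : EReal) ≠ 0 := by exact_mod_cast hk.ne'
  exact (EReal.continuousAt_mul (.inl hk0) (.inl hk0) (.inl (EReal.coe_ne_bot k))
    (.inl (EReal.coe_ne_top k))).comp (continuousAt_const.prodMk continuousAt_id)

section TwoStage

variable {m n : ℕ} (U : Set (Fin m → ℝ)) (c d : Fin n → ℝ) (A B : Matrix (Fin m) (Fin n) ℝ)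

theorem zAR_le_zAff : zAR U c d A B ≤ zAff U c d A B := by
  refine le_iInf fun ⟨⟨x, P, q⟩, hx, hfeas⟩ => iInf_le_of_le ⟨x, hx⟩ ?_
  gcongr with h
  exact iInf_le_of_le ⟨P *ᵥ h + q, hfeas h h.2⟩ le_rfl

noncomputable def worstRecourse (x : Fin n → ℝ) : EReal :=
  ⨆ h : U, ⨅ y : {y : Fin n → ℝ // 0 ≤ y ∧ (h : Fin m → ℝ) ≤ A *ᵥ x + B *ᵥ y},
    ((d ⬝ᵥ (y : Fin n → ℝ) : ℝ) : EReal)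

theorem zAR_eq_iInf_add_worstRecourse :
    zAR U c d A B = ⨅ x : {x : Fin n → ℝ // 0 ≤ x},
      ((c ⬝ᵥ (x : Fin n → ℝ) : ℝ) : EReal) + worstRecourse U d A B x :=
  rfl

variable {U c d A B}

theorem zAff_le_of_static {x q : Fin n → ℝ} (hx : 0 ≤ x) (hq : 0 ≤ q)
    (hfeas : ∀ h ∈ U, h ≤ A *ᵥ x + B *ᵥ q) :
    zAff U c d A B ≤ ((c ⬝ᵥ x + d ⬝ᵥ q : ℝ) : EReal) := by
  refine iInf_le_of_le ⟨(x, 0, q), hx, fun h hh => ?_⟩ ?_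
  · simpa using ⟨hq, hfeas h hh⟩
  · rw [EReal.coe_add]
    refine add_le_add_right (iSup_le fun h => ?_) _
    simp

theorem worstRecourse_nonneg (hU : U.Nonempty) (hd : 0 ≤ d) (x : Fin n → ℝ) :
    0 ≤ worstRecourse U d A B x := by
  obtain ⟨h, hh⟩ := hU
  refine le_iSup_of_le ⟨h, hh⟩ (le_iInf fun y => ?_)
  exact_mod_cast dotProduct_nonneg_of_nonneg hd y.2.1

theorem le_mulVec_add_of_worstRecourse_le {b dbar t : ℝ} (hb : 0 < b) (hdbar : 0 < dbar)
    (hBb : ∀ i j, B i j ≤ b) {x : Fin n → ℝ}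
    (ht : worstRecourse U (fun _ => dbar) A B x ≤ t) {h : Fin m → ℝ} (hh : h ∈ U) (i : Fin m) :
    h i ≤ (A *ᵥ x) i + b / dbar * t := by
  suffices hy : ((dbar / b * (h i - (A *ᵥ x) i) : ℝ) : EReal) ≤ worstRecourse U _ A B x by
    have hrec := EReal.coe_le_coe_iff.mp (hy.trans ht)
    calc h i = (A *ᵥ x) i + b / dbar * (dbar / b * (h i - (A *ᵥ x) i)) := by field_simp; ring
      _ ≤ (A *ᵥ x) i + b / dbar * t := by gcongr
  refine le_iSup_of_le ⟨h, hh⟩ (le_iInf fun ⟨y, hy, hfeas⟩ => EReal.coe_le_coe_iff.mpr ?_)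
  have hBy : (B *ᵥ y) i ≤ b * ∑ j, y j := by
    simp only [mulVec, dotProduct, Finset.mul_sum]
    exact Finset.sum_le_sum fun j _ => mul_le_mul_of_nonneg_right (hBb i j) (hy j)
  have := hfeas i
  simp only [Pi.add_apply] at this
  calc dbar / b * (h i - (A *ᵥ x) i) ≤ dbar / b * (b * ∑ j, y j) := by gcongr; linarith
    _ = (fun _ => dbar) ⬝ᵥ y := by simp [dotProduct, Finset.mul_sum]; field_simp

theorem zAff_le_of_forall_le_mulVec_add {σ dbar s : ℝ} (hn : 1 ≤ n) (hσ : 0 < σ)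
    (hrow : ∀ i, n * σ ≤ ∑ j, B i j) {x : Fin n → ℝ} (hx : 0 ≤ x) (hs : 0 ≤ s)
    (hshort : ∀ h ∈ U, ∀ i, h i ≤ (A *ᵥ x) i + s) :
    zAff U c (fun _ => dbar) A B ≤ ((c ⬝ᵥ x + dbar * s / σ : ℝ) : EReal) := by
  have hnσ : 0 < n * σ := by positivity
  have hBq (i : Fin m) : s ≤ (B *ᵥ fun _ => s / (n * σ)) i :=
    calc s = n * σ * (s / (n * σ)) := by field_simp
      _ ≤ (∑ j, B i j) * (s / (n * σ)) := by gcongr; exact hrow i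
      _ = (B *ᵥ fun _ => s / (n * σ)) i := by simp [mulVec, dotProduct, Finset.sum_mul]
  refine (zAff_le_of_static hx (q := fun _ => s / (n * σ)) (fun _ => by positivity)
    fun h hh i => (hshort h hh i).trans (by simpa using hBq i)).trans_eq ?_
  congr 2
  simp [dotProduct]
  field_simp

theorem zAff_le_mul_zAR {b σ dbar : ℝ} (hU : U.Nonempty) (hc : 0 ≤ c) (hn : 1 ≤ n)
    (hσ : 0 < σ) (hσb : σ ≤ b) (hdbar : 0 < dbar) (hBb : ∀ i j, B i j ≤ b)
    (hrow : ∀ i, n * σ ≤ ∑ j, B i j) :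
    zAff U c (fun _ => dbar) A B ≤ ((b / σ : ℝ) : EReal) * zAR U c (fun _ => dbar) A B := by
  have hb : 0 < b := hσ.trans_le hσb
  have hk : 0 < b / σ := by positivity
  rw [zAR_eq_iInf_add_worstRecourse, EReal.coe_mul_iInf_of_pos hk]
  refine le_iInf fun ⟨x, hx⟩ => ?_
  have hW0 : 0 ≤ worstRecourse U (fun _ => dbar) A B x :=
    worstRecourse_nonneg hU (fun _ => hdbar.le) x
  obtain hW | hW := eq_or_ne (worstRecourse U (fun _ => dbar) A B x) ⊤
  · rw [hW, EReal.coe_add_top, EReal.coe_mul_top_of_pos hk]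
    exact le_top
  obtain ⟨t, ht⟩ : ∃ t : ℝ, worstRecourse U (fun _ => dbar) A B x = t :=
    ⟨_, (EReal.coe_toReal hW (ne_bot_of_le_ne_bot EReal.zero_ne_bot hW0)).symm⟩
  have ht0 : 0 ≤ t := by exact_mod_cast ht ▸ hW0
  have hshort := fun h hh i => le_mulVec_add_of_worstRecourse_le hb hdbar hBb ht.le (h := h) hh i
  refine (zAff_le_of_forall_le_mulVec_add hn hσ hrow hx (by positivity) hshort).trans ?_
  rw [ht, ← EReal.coe_add, ← EReal.coe_mul, EReal.coe_le_coe_iff]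
  have hcx : 0 ≤ c ⬝ᵥ x := dotProduct_nonneg_of_nonneg hc hx
  calc c ⬝ᵥ x + dbar * (b / dbar * t) / σ = c ⬝ᵥ x + b / σ * t := by field_simp
    _ ≤ b / σ * (c ⬝ᵥ x) + b / σ * t := by
        gcongr
        exact le_mul_of_one_le_left hcx ((one_le_div hσ).mpr hσb)
    _ = b / σ * (c ⬝ᵥ x + t) := by ring

end TwoStage

theorem affine_approx_bounded_support_general {m n L : ℕ} (hn : 1 ≤ n)
    (c : Fin n → ℝ) (A : Matrix (Fin m) (Fin n) ℝ)
    (R : Matrix (Fin L) (Fin m) ℝ) (r : Fin L → ℝ)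
    (hc : 0 ≤ c)
    (hU : (polyU R r).Nonempty)
    (b μ dbar : ℝ) (hb : 0 < b) (hμ : 0 < μ) (hμb : μ ≤ b) (hdbar : 0 < dbar)
    (ε : ℝ) (hε : ε = (b / μ) * Real.sqrt (Real.log m / n)) (hε1 : ε < 1)
    {Ω : Type} [MeasurableSpace Ω] (Pr : Measure Ω) [IsProbabilityMeasure Pr]
    (Bt : Fin m → Fin n → Ω → ℝ)
    (hmeas : ∀ i j, Measurable (Bt i j))
    (hindep : iIndepFun
      (fun p : Fin m × Fin n => Bt p.1 p.2) Pr)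
    (hbdd : ∀ i j ω, Bt i j ω ∈ Set.Icc (0 : ℝ) b)
    (hmean : ∀ i j, ∫ ω, Bt i j ω ∂Pr = μ) :
    ENNReal.ofReal (1 - 1 / m) ≤
      Pr {ω | zAR (polyU R r) c (fun _ => dbar) A (fun i j => Bt i j ω) ≤
              zAff (polyU R r) c (fun _ => dbar) A (fun i j => Bt i j ω) ∧
            zAff (polyU R r) c (fun _ => dbar) A (fun i j => Bt i j ω) ≤
              ((b / (μ * (1 - ε)) : ℝ) : EReal) *
                zAR (polyU R r) c (fun _ => dbar) A (fun i j => Bt i j ω)} := by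
  have hε0 : 0 ≤ ε := hε ▸ by positivity
  have hσ : 0 < μ * (1 - ε) := mul_pos hμ (by linarith)
  have hσb : μ * (1 - ε) ≤ b := by nlinarith
  have hrow (i : Fin m) :
      Pr.real {ω | ∑ j, Bt i j ω ≤ n * (μ * (1 - ε))} ≤ ((m : ℝ) ^ 2)⁻¹ :=
    measureReal_sum_le_mul_one_sub_le i.pos hn (hindep.precomp (Prod.mk_right_injective i))
      (hmeas i) hb hμ (hbdd i) (hmean i) hε
  have hgood := ofReal_one_sub_card_mul_le_measure_iInter_compl hrow
  rw [Fintype.card_fin, show (m : ℝ) * ((m : ℝ) ^ 2)⁻¹ = 1 / m by grind] at hgood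
  refine hgood.trans (measure_mono fun ω hω => ?_)
  simp only [Set.mem_iInter, Set.mem_compl_iff, Set.mem_ofPred_eq, not_le] at hω
  exact ⟨zAR_le_zAff .., zAff_le_mul_zAR hU hc hn hσ hσb hdbar (fun i j => (hbdd i j ω).2)
    fun i => (hω i).le⟩

/-- For i.i.d. entries supported in `[0,b]` with mean `μ`, with probability
at least `1 - 1/m`, affine policies are a `b/(μ(1-ε))`-approximation of the adjustable
problem, where `ε = (b/μ)√(log m / n)`. -/
theorem affine_approx_bounded_support {m n L : ℕ} (hm : 2 ≤ m) (hn : 1 ≤ n) (hL : 0 < L)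
    (c : Fin n → ℝ) (A : Matrix (Fin m) (Fin n) ℝ)
    (R : Matrix (Fin L) (Fin m) ℝ) (r : Fin L → ℝ)
    (hc : 0 ≤ c) (hA : ∀ i j, 0 ≤ A i j) (hR : ∀ i j, 0 ≤ R i j) (hr : 0 ≤ r)
    (hU : (polyU R r).Nonempty) (hUbdd : Bornology.IsBounded (polyU R r))
    (b μ dbar : ℝ) (hb : 0 < b) (hμ : 0 < μ) (hμb : μ ≤ b) (hdbar : 0 < dbar)
    (ε : ℝ) (hε : ε = (b / μ) * Real.sqrt (Real.log m / n)) (hε1 : ε < 1)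
    {Ω : Type} [MeasurableSpace Ω] (Pr : Measure Ω) [IsProbabilityMeasure Pr]
    (Bt : Fin m → Fin n → Ω → ℝ)
    (hmeas : ∀ i j, Measurable (Bt i j))
    (hindep : iIndepFun
      (fun p : Fin m × Fin n => Bt p.1 p.2) Pr)
    (hident : ∀ i j i' j', IdentDistrib (Bt i j) (Bt i' j') Pr Pr)
    (hbdd : ∀ i j ω, Bt i j ω ∈ Set.Icc (0 : ℝ) b)
    (hmean : ∀ i j, ∫ ω, Bt i j ω ∂Pr = μ) :
    ENNReal.ofReal (1 - 1 / m) ≤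
      Pr {ω | zAR (polyU R r) c (fun _ => dbar) A (fun i j => Bt i j ω) ≤
              zAff (polyU R r) c (fun _ => dbar) A (fun i j => Bt i j ω) ∧
            zAff (polyU R r) c (fun _ => dbar) A (fun i j => Bt i j ω) ≤
              ((b / (μ * (1 - ε)) : ℝ) : EReal) *
                zAR (polyU R r) c (fun _ => dbar) A (fun i j => Bt i j ω)} :=
  affine_approx_bounded_support_general hn c A R r hc hU b μ dbar hb hμ hμb hdbar ε hε hε1 Pr Bt
    hmeas hindep hbdd hmean
end

section
/- There exist a constant c₀ > 0 and M ∈ ℕ such that for all m ≥ M the following holds. Consider the two-stage instance with n = m, c = 0, A = 0, d = e (the all-ones vector of ℝ^m), uncertainty set U = conv({0, e₁, …, e_m, ν₁, …, ν_m}) where e_i are the standard basis vectors of ℝ^m and ν_i = (1/√m)(e − e_i), and random matrix B̃ with B̃_ii = 1 and B̃_ij = ũ_ij/√m for i ≠ j, where the ũ_ij (i ≠ j) are i.i.d. uniform on [0,1]. Then with probability at least 1 − 1/m, z_Aff(B̃) ≥ c₀·√m·z_AR(B̃). -/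
/-!
With `c = 0`, `A = 0` and `d = e`, any recourse matrix `B` with unit diagonal, off-diagonal
entries in `[0, 1/√m]` and row sums at least `√m/4` has `z_AR(B) ≤ 4`: the set of scenarios
coverable at cost `4` is convex and contains the generators of `U` (take `y = eᵢ` for `eᵢ` and
`y = (4/m) e` for `νᵢ`). An affine policy `y(h) = P h + q` on the other hand costs at least
`√m/4` somewhere: if all its costs were smaller, covering `e_j` would give
`1 ≤ y_j(e_j) + cost(e_j)/√m`, hence `3m/4 < tr P + Σ q`; nonnegativity of `yᵢ(νᵢ)` gives
`tr P ≤ Σ P + √m Σ q`; and the costs at `e₀` and `ν₀` give `Σ P + (√m + 1) Σ q < m/4 + √m/4`,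
a contradiction.

The random matrix `B̃` has these properties as soon as every off-diagonal row sum of `ũ`
exceeds `m/4`. By the Chernoff bound with `E e^{-4ũ} ≤ 1/4` a row fails with probability at
most `e^m 4^{1-m}`, and a union bound over the `m` rows leaves at most `1/m` for `m ≥ 64`.
-/

open Matrix MeasureTheory ProbabilityTheory

/-- The uncertainty set of the worst-case instance:
`U = conv{0, e₁, …, e_m, ν₁, …, ν_m}` with `νᵢ = (1/√m)(e - eᵢ)`. -/
noncomputable def badU (m : ℕ) : Set (Fin m → ℝ) :=
  convexHull ℝ (insert 0
    (Set.range (fun i : Fin m => (Pi.single i 1 : Fin m → ℝ)) ∪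
      Set.range (fun i : Fin m => (Real.sqrt m)⁻¹ • ((1 : Fin m → ℝ) - Pi.single i 1))))

/-- The worst-case recourse matrix: `B_ii = 1`, `B_ij = 1/√m` for `i ≠ j`. -/
noncomputable def badB (m : ℕ) : Matrix (Fin m) (Fin m) ℝ :=
  Matrix.of fun i j => if i = j then (1 : ℝ) else 1 / Real.sqrt m

/-- The random perturbed worst-case matrix: `B̃_ii = 1`, `B̃_ij = ũ_ij/√m` for `i ≠ j`. -/
noncomputable def badBrand (m : ℕ) {Ω : Type} (u : Fin m → Fin m → Ω → ℝ) (ω : Ω) :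
    Matrix (Fin m) (Fin m) ℝ :=
  Matrix.of fun i j => if i = j then (1 : ℝ) else u i j ω / Real.sqrt m


open Finset

section Recourse

variable {m n : ℕ} {U : Set (Fin m → ℝ)} {c d : Fin n → ℝ} {A B : Matrix (Fin m) (Fin n) ℝ}

lemma zAR_le_of_forall_exists_recourse {t : ℝ}
    (H : ∀ h ∈ U, ∃ y, 0 ≤ y ∧ h ≤ B *ᵥ y ∧ d ⬝ᵥ y ≤ t) : zAR U c d A B ≤ t := by
  refine iInf_le_of_le ⟨0, le_rfl⟩ ?_
  rw [dotProduct_zero, EReal.coe_zero, zero_add]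
  refine iSup_le fun h => ?_
  obtain ⟨y, hy, hcov, hcost⟩ := H h h.2
  exact iInf_le_of_le ⟨y, hy, by simpa using hcov⟩ (EReal.coe_le_coe_iff.mpr hcost)

lemma le_zAff_of_forall_exists_scenario {t : ℝ}
    (H : ∀ x P q, 0 ≤ x → (∀ h ∈ U, 0 ≤ P *ᵥ h + q ∧ h ≤ A *ᵥ x + B *ᵥ (P *ᵥ h + q)) →
      ∃ h ∈ U, t ≤ c ⬝ᵥ x + d ⬝ᵥ (P *ᵥ h + q)) :
    t ≤ zAff U c d A B := by
  refine le_iInf fun p => ?_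
  obtain ⟨h, hU, ht⟩ := H _ _ _ p.2.1 p.2.2
  calc (t : EReal)
      ≤ ((c ⬝ᵥ p.1.1 : ℝ) : EReal) + ((d ⬝ᵥ (p.1.2.1 *ᵥ h + p.1.2.2) : ℝ) : EReal) := by
        exact_mod_cast ht
    _ ≤ _ := by gcongr; exact le_iSup_of_le (⟨h, hU⟩ : U) le_rfl

lemma convex_setOf_exists_recourse (B : Matrix (Fin m) (Fin n) ℝ) (d : Fin n → ℝ) (t : ℝ) :
    Convex ℝ {h | ∃ y, 0 ≤ y ∧ h ≤ B *ᵥ y ∧ d ⬝ᵥ y ≤ t} := by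
  rintro h₁ ⟨y₁, hy₁, hcov₁, hcost₁⟩ h₂ ⟨y₂, hy₂, hcov₂, hcost₂⟩ a b ha hb hab
  refine ⟨a • y₁ + b • y₂, by positivity, ?_, ?_⟩
  · rw [mulVec_add, mulVec_smul, mulVec_smul]
    gcongr
  · rw [dotProduct_add, dotProduct_smul, dotProduct_smul, smul_eq_mul, smul_eq_mul]
    calc a * (d ⬝ᵥ y₁) + b * (d ⬝ᵥ y₂) ≤ a * t + b * t := by gcongr
      _ = t := by rw [← add_mul, hab, one_mul]

end Recourse

section BadInstance

variable {m : ℕ}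

lemma single_mem_badU (j : Fin m) : (Pi.single j 1 : Fin m → ℝ) ∈ badU m :=
  subset_convexHull ℝ _ (Set.mem_insert_of_mem _ (Or.inl ⟨j, rfl⟩))

lemma nu_mem_badU (i : Fin m) :
    (√(m : ℝ))⁻¹ • ((1 : Fin m → ℝ) - Pi.single i 1) ∈ badU m :=
  subset_convexHull ℝ _ (Set.mem_insert_of_mem _ (Or.inr ⟨i, rfl⟩))

lemma exists_recourse_of_mem_badU {B : Matrix (Fin m) (Fin m) ℝ} (hB0 : ∀ i j, 0 ≤ B i j)
    (hBd : ∀ i, 1 ≤ B i i) (hrow : ∀ i, √(m : ℝ) / 4 ≤ ∑ j, B i j) :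
    ∀ h ∈ badU m, ∃ y, 0 ≤ y ∧ h ≤ B *ᵥ y ∧ 1 ⬝ᵥ y ≤ 4 := by
  refine fun h hh => convexHull_min ?_ (convex_setOf_exists_recourse B 1 4) hh
  rintro h (rfl | ⟨i, rfl⟩ | ⟨i, rfl⟩)
  · exact ⟨0, le_rfl, by simp, by simp⟩
  · refine ⟨Pi.single i 1, by simp [Pi.single_nonneg], fun k => ?_, by simp⟩
    rw [mulVec_single_one]
    rcases eq_or_ne k i with rfl | hki
    · simpa using hBd k
    · simpa [hki] using hB0 k i
  · have hm : (m : ℝ) ≠ 0 := Nat.cast_ne_zero.2 i.pos.ne'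
    refine ⟨(4 / m : ℝ) • 1, fun k => by simp; positivity, fun k => ?_, by simp [hm]⟩
    calc ((√(m : ℝ))⁻¹ • ((1 : Fin m → ℝ) - Pi.single i 1) : Fin m → ℝ) k
        ≤ (√(m : ℝ))⁻¹ := by rcases eq_or_ne k i with rfl | hki <;> simp [*]
      _ = 4 / m * (√(m : ℝ) / 4) := by
          rw [← Real.sqrt_div_self, div_mul_div_comm, mul_comm (4 : ℝ),
            mul_div_mul_right _ _ four_ne_zero]
      _ ≤ 4 / m * ∑ j, B k j := by gcongr; exact hrow k
      _ = (B *ᵥ ((4 / m : ℝ) • 1)) k := by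
          rw [mulVec_smul]; simp [mulVec, dotProduct]

end BadInstance

section AffinePolicy

variable {m : ℕ}

lemma mulVec_apply_le_apply_add_mul_sum {B : Matrix (Fin m) (Fin m) ℝ} {y : Fin m → ℝ}
    {s : ℝ} {j : Fin m} (hBd : B j j ≤ 1) (hB : ∀ l, l ≠ j → B j l ≤ s) (hs : 0 ≤ s)
    (hy : 0 ≤ y) : (B *ᵥ y) j ≤ y j + s * ∑ l, y l :=
  calc (B *ᵥ y) j = ∑ l, B j l * y l := rfl
    _ ≤ ∑ l, ((Pi.single j 1 : Fin m → ℝ) l + s) * y l := by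
        refine sum_le_sum fun l _ => mul_le_mul_of_nonneg_right ?_ (hy l)
        rcases eq_or_ne l j with rfl | hl
        · simpa using hBd.trans (le_add_of_nonneg_right hs)
        · simpa [hl] using hB l hl
    _ = y j + s * ∑ l, y l := by simp [add_mul, sum_add_distrib, mul_sum, Pi.single_apply]

lemma mulVec_smul_one_sub_single_apply (P : Matrix (Fin m) (Fin m) ℝ) (s : ℝ) (i k : Fin m) :
    (P *ᵥ (s • (1 - Pi.single i 1))) k = s * (∑ j, P k j - P k i) := by
  rw [mulVec_smul, mulVec_sub, mulVec_single_one]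
  simp [mulVec, dotProduct]

lemma natCast_lt_sum_diag_add_of_cheap_singles [NeZero m] {B P : Matrix (Fin m) (Fin m) ℝ}
    {q : Fin m → ℝ} (hBd : ∀ i, B i i ≤ 1) (hB : ∀ i j, i ≠ j → B i j ≤ (√(m : ℝ))⁻¹)
    (hfeas : ∀ j, 0 ≤ P *ᵥ Pi.single j 1 + q ∧
      Pi.single j 1 ≤ B *ᵥ (P *ᵥ Pi.single j 1 + q))
    (hcost : ∀ j, ∑ k, (P k j + q k) < √(m : ℝ) / 4) :
    (m : ℝ) < ∑ j, P j j + ∑ k, q k + m / 4 := by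
  have hr : 0 < √(m : ℝ) := Real.sqrt_pos.2 (Nat.cast_pos.2 (NeZero.pos m))
  have hcov : ∀ j, 1 ≤ (P j j + q j) + (√(m : ℝ))⁻¹ * ∑ k, (P k j + q k) := fun j => by
    obtain ⟨hy, hcover⟩ := hfeas j
    simpa [mulVec_single_one] using (hcover j).trans
      (mulVec_apply_le_apply_add_mul_sum (hBd j) (fun l hl => hB j l hl.symm)
        (inv_nonneg.2 hr.le) hy)
  calc (m : ℝ) = ∑ j : Fin m, (1 : ℝ) := by simp
    _ ≤ ∑ j, ((P j j + q j) + (√(m : ℝ))⁻¹ * ∑ k, (P k j + q k)) :=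
        sum_le_sum fun j _ => hcov j
    _ < ∑ j : Fin m, ((P j j + q j) + (√(m : ℝ))⁻¹ * (√(m : ℝ) / 4)) :=
        sum_lt_sum_of_nonempty univ_nonempty fun j _ => by gcongr; exact hcost j
    _ = ∑ j, P j j + ∑ k, q k + m / 4 := by
        rw [sum_add_distrib, sum_add_distrib, sum_const, card_univ, Fintype.card_fin,
          nsmul_eq_mul]
        field_simp

theorem exists_costly_scenario [NeZero m] {B P : Matrix (Fin m) (Fin m) ℝ} {q : Fin m → ℝ}
    (hBd : ∀ i, B i i ≤ 1) (hB : ∀ i j, i ≠ j → B i j ≤ (√(m : ℝ))⁻¹)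
    (hfeas : ∀ h ∈ badU m, 0 ≤ P *ᵥ h + q ∧ h ≤ B *ᵥ (P *ᵥ h + q)) :
    ∃ h ∈ badU m, √(m : ℝ) / 4 ≤ ∑ k, (P *ᵥ h + q) k := by
  by_contra! hcost
  have hr : 0 < √(m : ℝ) := Real.sqrt_pos.2 (Nat.cast_pos.2 (NeZero.pos m))
  have hrr : √(m : ℝ) * √(m : ℝ) = m := Real.mul_self_sqrt (Nat.cast_nonneg m)
  have hsingle : ∀ j, ∑ k, (P k j + q k) < √(m : ℝ) / 4 := fun j => by
    simpa [mulVec_single_one] using hcost _ (single_mem_badU j)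
  have hdiag := natCast_lt_sum_diag_add_of_cheap_singles hBd hB
    (fun j => hfeas _ (single_mem_badU j)) hsingle
  have htrace : ∑ j, P j j ≤ ∑ k, ∑ j, P k j + √(m : ℝ) * ∑ k, q k := by
    have h0 : 0 ≤ ∑ i, ((√(m : ℝ))⁻¹ * (∑ j, P i j - P i i) + q i) :=
      sum_nonneg fun i _ => by
        simpa [mulVec_smul_one_sub_single_apply] using (hfeas _ (nu_mem_badU i)).1 i
    rw [sum_add_distrib, ← mul_sum, sum_sub_distrib] at h0
    have := mul_nonneg hr.le h0
    rw [mul_add, ← mul_assoc, mul_inv_cancel₀ hr.ne', one_mul] at this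
    linarith
  have htotal : ∑ k, ∑ j, P k j + √(m : ℝ) * ∑ k, q k + ∑ k, q k < m / 4 + √(m : ℝ) / 4 := by
    have hν : ∑ k, ((√(m : ℝ))⁻¹ * (∑ j, P k j - P k 0) + q k) < √(m : ℝ) / 4 := by
      simpa [mulVec_smul_one_sub_single_apply] using hcost _ (nu_mem_badU 0)
    have he := hsingle 0
    rw [sum_add_distrib, ← mul_sum, sum_sub_distrib] at hν
    rw [sum_add_distrib] at he
    have := mul_lt_mul_of_pos_left hν hr
    rw [mul_add, ← mul_assoc, mul_inv_cancel₀ hr.ne', one_mul, ← mul_div_assoc, hrr] at this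
    linarith
  have hrm : √(m : ℝ) ≤ m := Real.sqrt_le_self_iff.2 (Or.inr (Nat.one_le_cast.2 NeZero.one_le))
  linarith

end AffinePolicy

section DeterministicGap

variable {m : ℕ}

lemma sqrt_div_four_le_zAff [NeZero m] {B : Matrix (Fin m) (Fin m) ℝ} (hBd : ∀ i, B i i ≤ 1)
    (hB : ∀ i j, i ≠ j → B i j ≤ (√(m : ℝ))⁻¹) :
    ((√(m : ℝ) / 4 : ℝ) : EReal) ≤ zAff (badU m) 0 1 0 B :=
  le_zAff_of_forall_exists_scenario fun _ _ _ _ hfeas => by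
    obtain ⟨h, hU, hcost⟩ := exists_costly_scenario hBd hB fun h hh => by
      simpa using hfeas h hh
    exact ⟨h, hU, by rwa [zero_dotProduct, zero_add, one_dotProduct]⟩

theorem mul_zAR_badU_le_zAff [NeZero m] {B : Matrix (Fin m) (Fin m) ℝ} (hB0 : ∀ i j, 0 ≤ B i j)
    (hBd : ∀ i, B i i = 1) (hB : ∀ i j, i ≠ j → B i j ≤ (√(m : ℝ))⁻¹)
    (hrow : ∀ i, √(m : ℝ) / 4 ≤ ∑ j, B i j) :
    ((1 / 16 * √(m : ℝ) : ℝ) : EReal) * zAR (badU m) 0 1 0 B ≤ zAff (badU m) 0 1 0 B :=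
  calc ((1 / 16 * √(m : ℝ) : ℝ) : EReal) * zAR (badU m) 0 1 0 B
      ≤ ((1 / 16 * √(m : ℝ) : ℝ) : EReal) * (4 : ℝ) :=
        mul_le_mul_of_nonneg_left
          (zAR_le_of_forall_exists_recourse
            (exists_recourse_of_mem_badU hB0 (fun i => (hBd i).ge) hrow))
          (EReal.coe_nonneg.2 (by positivity))
    _ = ((√(m : ℝ) / 4 : ℝ) : EReal) := by rw [← EReal.coe_mul]; congr 1; ring
    _ ≤ zAff (badU m) 0 1 0 B := sqrt_div_four_le_zAff (fun i => (hBd i).le) hB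

end DeterministicGap

section RandomInstance

variable {m : ℕ} {Ω : Type}

lemma mul_zAR_badBrand_le_zAff [NeZero m] {u : Fin m → Fin m → Ω → ℝ} {ω : Ω}
    (hu : ∀ i j, i ≠ j → u i j ω ∈ Set.Icc (0 : ℝ) 1)
    (hrow : ∀ i, (m : ℝ) / 4 ≤ ∑ j : {j // j ≠ i}, u i j ω) :
    ((1 / 16 * √(m : ℝ) : ℝ) : EReal) * zAR (badU m) 0 1 0 (badBrand m u ω) ≤
      zAff (badU m) 0 1 0 (badBrand m u ω) := by
  have hr : 0 < √(m : ℝ) := Real.sqrt_pos.2 (Nat.cast_pos.2 (NeZero.pos m))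
  have hoff : ∀ i j, i ≠ j → badBrand m u ω i j = u i j ω / √(m : ℝ) := fun i j hij => if_neg hij
  have hB0 : ∀ i j, 0 ≤ badBrand m u ω i j := fun i j => by
    rcases eq_or_ne i j with rfl | hij
    · simp [badBrand]
    · rw [hoff i j hij]; exact div_nonneg (hu i j hij).1 hr.le
  refine mul_zAR_badU_le_zAff hB0 (fun i => if_pos rfl) (fun i j hij => ?_) (fun i => ?_)
  · rw [hoff i j hij, ← one_div]; gcongr; exact (hu i j hij).2
  · calc √(m : ℝ) / 4 = (m / 4) / √(m : ℝ) := by rw [div_right_comm (m : ℝ), Real.div_sqrt]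
      _ ≤ (∑ j : {j // j ≠ i}, u i j ω) / √(m : ℝ) := by gcongr; exact hrow i
      _ = ∑ j : {j // j ≠ i}, badBrand m u ω i j := by
          rw [sum_div]; exact sum_congr rfl fun j _ => (hoff i j j.2.symm).symm
      _ = ∑ j ∈ univ.map (Function.Embedding.subtype (· ≠ i)), badBrand m u ω i j :=
          (sum_map univ (Function.Embedding.subtype _) (badBrand m u ω i)).symm
      _ ≤ ∑ j, badBrand m u ω i j := sum_le_univ_sum_of_nonneg (hB0 i)

end RandomInstance

section UniformDistribution

variable {Ω : Type*} [MeasurableSpace Ω] {μ : Measure Ω} {X : Ω → ℝ}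

lemma ae_mem_Icc_of_map_eq_uniform (hX : Measurable X)
    (hmap : μ.map X = volume.restrict (Set.Icc (0 : ℝ) 1)) :
    ∀ᵐ ω ∂μ, X ω ∈ Set.Icc (0 : ℝ) 1 :=
  ae_of_ae_map hX.aemeasurable (hmap ▸ ae_restrict_mem measurableSet_Icc)

lemma mgf_of_map_eq_uniform (hX : Measurable X)
    (hmap : μ.map X = volume.restrict (Set.Icc (0 : ℝ) 1)) {t : ℝ} (ht : t ≠ 0) :
    mgf X μ t = (Real.exp t - 1) / t := by
  rw [mgf, ← integral_map (f := fun x => Real.exp (t * x)) hX.aemeasurable (by fun_prop), hmap,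
    integral_Icc_eq_integral_Ioc, ← intervalIntegral.integral_of_le zero_le_one,
    intervalIntegral.integral_comp_mul_left (fun x => Real.exp x) ht, integral_exp]
  simp [div_eq_inv_mul]

end UniformDistribution

section ProbabilityBounds

variable {Ω : Type*} [MeasurableSpace Ω] {μ : Measure Ω}

lemma measureReal_sum_le_le_of_iIndepFun {ι : Type*} [Fintype ι] {X : ι → Ω → ℝ}
    (hindep : iIndepFun X μ) (hmeas : ∀ i, Measurable (X i)) (hX0 : ∀ i, 0 ≤ᵐ[μ] X i)
    {t a : ℝ} (ht : 0 ≤ t) (hmgf : ∀ i, mgf (X i) μ (-t) ≤ a) (ε : ℝ) :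
    μ.real {ω | ∑ i, X i ω ≤ ε} ≤ Real.exp (t * ε) * a ^ Fintype.card ι := by
  have := hindep.isProbabilityMeasure
  have hint : ∀ i ∈ (univ : Finset ι), Integrable (fun ω => Real.exp (-t * X i ω)) μ :=
    fun i _ => Integrable.mono' (integrable_const 1)
      ((hmeas i).const_mul _).exp.aestronglyMeasurable <| (hX0 i).mono fun ω h => by
        rw [Real.norm_eq_abs, abs_of_pos (Real.exp_pos _), Real.exp_le_one_iff]
        exact mul_nonpos_of_nonpos_of_nonneg (neg_nonpos.2 ht) h
  calc μ.real {ω | ∑ i, X i ω ≤ ε} = μ.real {ω | (∑ i, X i) ω ≤ ε} := by simp [Finset.sum_apply]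
    _ ≤ Real.exp (- -t * ε) * mgf (∑ i, X i) μ (-t) :=
        measure_le_le_exp_mul_mgf ε (neg_nonpos.2 ht) (hindep.integrable_exp_mul_sum hmeas hint)
    _ = Real.exp (t * ε) * ∏ i, mgf (X i) μ (-t) := by rw [neg_neg, hindep.mgf_sum hmeas]
    _ ≤ Real.exp (t * ε) * ∏ _i : ι, a := by
        gcongr with i
        · exact fun i _ => mgf_nonneg
        · exact hmgf i
    _ = Real.exp (t * ε) * a ^ Fintype.card ι := by rw [prod_const, card_univ]

lemma ofReal_one_sub_le_of_measureReal_compl_le [IsProbabilityMeasure μ] {s : Set Ω} {δ : ℝ}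
    (h : μ.real sᶜ ≤ δ) : ENNReal.ofReal (1 - δ) ≤ μ s := by
  rw [← ofReal_measureReal]
  refine ENNReal.ofReal_le_ofReal ?_
  have := measureReal_union_le (μ := μ) s sᶜ
  rw [Set.union_compl_self, probReal_univ] at this
  linarith

end ProbabilityBounds

lemma measureReal_sum_offDiag_le_le {m : ℕ} {Ω : Type*} [MeasurableSpace Ω] {μ : Measure Ω}
    {u : Fin m → Fin m → Ω → ℝ} (hmeas : ∀ i j, i ≠ j → Measurable (u i j))
    (hindep : iIndepFun (fun p : {p : Fin m × Fin m // p.1 ≠ p.2} => u p.1.1 p.1.2) μ)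
    (hmap : ∀ i j, i ≠ j → μ.map (u i j) = volume.restrict (Set.Icc (0 : ℝ) 1)) (i : Fin m) :
    μ.real {ω | ∑ j : {j // j ≠ i}, u i j ω ≤ m / 4} ≤ Real.exp m * (1 / 4) ^ (m - 1) := by
  have hrow : iIndepFun (fun j : {j // j ≠ i} => u i j) μ :=
    hindep.precomp (g := fun j : {j // j ≠ i} => ⟨(i, j.1), j.2.symm⟩)
      fun j k h => Subtype.ext (congrArg (fun p => p.1.2) h)
  have hmgf : ∀ j : {j // j ≠ i}, mgf (u i j) μ (-4) ≤ 1 / 4 := fun j => by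
    rw [mgf_of_map_eq_uniform (hmeas i j j.2.symm) (hmap i j j.2.symm) (by norm_num),
      div_le_iff_of_neg (by norm_num)]
    linarith [Real.exp_pos (-4)]
  have := measureReal_sum_le_le_of_iIndepFun hrow (fun j => hmeas i j j.2.symm)
    (fun j => (ae_mem_Icc_of_map_eq_uniform (hmeas i j j.2.symm) (hmap i j j.2.symm)).mono
      fun _ h => h.1) zero_le_four hmgf (m / 4)
  rwa [mul_div_cancel₀ _ four_ne_zero, Fintype.card_subtype_compl, Fintype.card_fin,
    Fintype.card_subtype_eq] at this

lemma four_mul_sq_mul_three_pow_le_four_pow {m : ℕ} (hm : 64 ≤ m) : 4 * m ^ 2 * 3 ^ m ≤ 4 ^ m := by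
  induction m, hm using Nat.le_induction with
  | base => norm_num
  | succ n hn ih =>
    calc 4 * (n + 1) ^ 2 * 3 ^ (n + 1) = 3 * (n + 1) ^ 2 * (4 * 3 ^ n) := by ring
      _ ≤ 4 * n ^ 2 * (4 * 3 ^ n) := Nat.mul_le_mul_right _ (by nlinarith)
      _ = 4 * (4 * n ^ 2 * 3 ^ n) := by ring
      _ ≤ 4 ^ (n + 1) := pow_succ' 4 n ▸ Nat.mul_le_mul_left 4 ih

lemma natCast_mul_exp_mul_inv_four_pow_le {m : ℕ} (hm : 64 ≤ m) :
    (m : ℝ) * (Real.exp m * (1 / 4) ^ (m - 1)) ≤ 1 / m := by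
  have hm0 : (0 : ℝ) < m := by exact_mod_cast (by omega : 0 < m)
  have hexp : Real.exp m ≤ 3 ^ m := by
    rw [← Real.exp_one_pow]
    exact pow_le_pow_left₀ (Real.exp_pos 1).le (Real.exp_one_lt_d9.le.trans (by norm_num)) m
  have hpow : (1 / 4 : ℝ) ^ (m - 1) = 4 / 4 ^ m := by
    rw [_root_.one_div_pow, eq_div_iff (by positivity), ← pow_sub_mul_pow 4 (by omega : 1 ≤ m)]
    field_simp
  have hkey : 4 * (m : ℝ) ^ 2 * 3 ^ m ≤ 4 ^ m := by
    exact_mod_cast four_mul_sq_mul_three_pow_le_four_pow hm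
  rw [hpow, le_div_iff₀ hm0]
  calc (m : ℝ) * (Real.exp m * (4 / 4 ^ m)) * m = 4 * m ^ 2 * Real.exp m / 4 ^ m := by ring
    _ ≤ 4 * m ^ 2 * 3 ^ m / 4 ^ m := by gcongr
    _ ≤ 1 := (div_le_one (by positivity)).2 hkey

/-- There is a constant `c₀ > 0` such that for all sufficiently large `m`,
for the worst-case instance with i.i.d. uniform perturbations, with probability at least
`1 - 1/m` the affine policy value is at least `c₀ √m` times the adjustable value. -/
theorem affine_bad_random_instance :
    ∃ c₀ : ℝ, 0 < c₀ ∧ ∃ M : ℕ, ∀ m : ℕ, M ≤ m →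
      ∀ (Ω : Type) [MeasurableSpace Ω] (Pr : Measure Ω) [IsProbabilityMeasure Pr]
        (u : Fin m → Fin m → Ω → ℝ),
        (∀ i j, i ≠ j → Measurable (u i j)) →
        iIndepFun
          (fun p : {p : Fin m × Fin m // p.1 ≠ p.2} => u p.1.1 p.1.2) Pr →
        (∀ i j, i ≠ j → Measure.map (u i j) Pr = volume.restrict (Set.Icc (0 : ℝ) 1)) →
        ENNReal.ofReal (1 - 1 / m) ≤
          Pr {ω | ((c₀ * Real.sqrt m : ℝ) : EReal) *
                zAR (badU m) (0 : Fin m → ℝ) (fun _ => (1 : ℝ)) 0 (badBrand m u ω) ≤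
              zAff (badU m) (0 : Fin m → ℝ) (fun _ => (1 : ℝ)) 0 (badBrand m u ω)} := by
  refine ⟨1 / 16, by norm_num, 64, fun m hm Ω _ Pr _ u hmeas hindep hmap => ?_⟩
  have : NeZero m := ⟨by omega⟩
  have hgap : ∀ᵐ ω ∂Pr, ω ∈ {ω | ∀ i, (m : ℝ) / 4 < ∑ j : {j // j ≠ i}, u i j ω} →
      ((1 / 16 * √(m : ℝ) : ℝ) : EReal) * zAR (badU m) 0 1 0 (badBrand m u ω) ≤
        zAff (badU m) 0 1 0 (badBrand m u ω) := by
    filter_upwards [ae_all_iff.2 fun p : {p : Fin m × Fin m // p.1 ≠ p.2} =>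
      ae_mem_Icc_of_map_eq_uniform (hmeas _ _ p.2) (hmap _ _ p.2)] with ω hu hrow
    exact mul_zAR_badBrand_le_zAff (fun i j hij => hu ⟨(i, j), hij⟩) fun i => (hrow i).le
  refine (ofReal_one_sub_le_of_measureReal_compl_le ?_).trans (measure_mono_ae hgap)
  calc Pr.real {ω | ∀ i, (m : ℝ) / 4 < ∑ j : {j // j ≠ i}, u i j ω}ᶜ
      ≤ Pr.real (⋃ i, {ω | ∑ j : {j // j ≠ i}, u i j ω ≤ m / 4}) :=
        measureReal_mono fun ω => by simp
    _ ≤ ∑ i, Pr.real {ω | ∑ j : {j // j ≠ i}, u i j ω ≤ m / 4} := measureReal_iUnion_fintype_le _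
    _ ≤ ∑ _i : Fin m, Real.exp m * (1 / 4) ^ (m - 1) :=
        sum_le_sum fun i _ => measureReal_sum_offDiag_le_le hmeas hindep hmap i
    _ ≤ 1 / m := by
        rw [sum_const, card_univ, Fintype.card_fin, nsmul_eq_mul]
        exact natCast_mul_exp_mul_inv_four_pow_le hm
end

section
/- Let m ≥ 2 and consider the two-stage instance with n = m, c = 0, A = 0, d = e (the all-ones vector of ℝ^m), uncertainty set U = conv({0, e₁, …, e_m, ν₁, …, ν_m}) where ν_i = (1/√m)(e − e_i), and matrix B ∈ ℝ^{m×m} with B_ii = 1 and B_ij = 1/√m for i ≠ j. Then the optimal adjustable value satisfies z_AR(B) ≤ 1. -/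
open Matrix MeasureTheory ProbabilityTheory

lemma badU_witness (m : ℕ) (hm : 2 ≤ m) :
    ∀ h ∈ badU m, ∃ y : Fin m → ℝ, 0 ≤ y ∧ h ≤ badB m *ᵥ y ∧
      (fun _ : Fin m => (1 : ℝ)) ⬝ᵥ y ≤ 1 := by
  have hsm : (0 : ℝ) < Real.sqrt m := Real.sqrt_pos.2 (by positivity)
  intro h hh
  have hconv : Convex ℝ {h : Fin m → ℝ | ∃ y : Fin m → ℝ, 0 ≤ y ∧ h ≤ badB m *ᵥ y ∧
      (fun _ : Fin m => (1 : ℝ)) ⬝ᵥ y ≤ 1} := by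
    rintro h1 ⟨y1, hy1, hb1, hc1⟩ h2 ⟨y2, hy2, hb2, hc2⟩ a b ha hb hab
    refine ⟨a • y1 + b • y2, ?_, ?_, ?_⟩
    · exact add_nonneg (smul_nonneg ha hy1) (smul_nonneg hb hy2)
    · rw [Matrix.mulVec_add, Matrix.mulVec_smul, Matrix.mulVec_smul]
      exact add_le_add (smul_le_smul_of_nonneg_left hb1 ha)
        (smul_le_smul_of_nonneg_left hb2 hb)
    · rw [dotProduct_add, dotProduct_smul, dotProduct_smul]
      calc a • ((fun _ : Fin m => (1:ℝ)) ⬝ᵥ y1) + b • ((fun _ : Fin m => (1:ℝ)) ⬝ᵥ y2)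
          ≤ a • (1:ℝ) + b • (1:ℝ) :=
            add_le_add (smul_le_smul_of_nonneg_left hc1 ha)
              (smul_le_smul_of_nonneg_left hc2 hb)
        _ = 1 := by simp [smul_eq_mul, hab]
  refine convexHull_min ?_ hconv hh
  rintro x (rfl | (⟨i, rfl⟩ | ⟨i, rfl⟩))
  · exact ⟨0, le_refl _, by simp [Matrix.mulVec_zero], by simp⟩
  · refine ⟨Pi.single i 1, ?_, ?_, ?_⟩
    · intro j; by_cases hji : j = i <;> simp [Pi.single_apply, hji]
    · intro j
      have : (badB m *ᵥ Pi.single i 1) j = badB m j i := by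
        simp [Matrix.mulVec_single]
      rw [this]
      by_cases hji : j = i
      · simp [hji, badB, Pi.single_apply]
      · simp only [Pi.single_apply, hji, if_false, badB, Matrix.of_apply]
        positivity
    · simp [dotProduct]
  · refine ⟨Pi.single i 1, ?_, ?_, ?_⟩
    · intro j; by_cases hji : j = i <;> simp [Pi.single_apply, hji]
    · intro j
      have hBj : (badB m *ᵥ Pi.single i 1) j = badB m j i := by
        simp [Matrix.mulVec_single]
      rw [hBj]
      by_cases hji : j = i
      · subst hji
        simp [badB, Pi.single_apply]
      · simp only [Pi.smul_apply, Pi.sub_apply, Pi.one_apply, Pi.single_apply]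
        rw [if_neg hji]
        simp only [badB, Matrix.of_apply, if_neg hji]
        rw [smul_eq_mul]
        rw [one_div]
        ring_nf
        exact le_refl _
    · simp [dotProduct]

/-- For the deterministic worst-case instance, the optimal adjustable
value is at most `1`. -/
theorem adjustable_bad_instance_le_one (m : ℕ) (hm : 2 ≤ m) :
    zAR (badU m) (0 : Fin m → ℝ) (fun _ => (1 : ℝ)) 0 (badB m) ≤ (1 : EReal) := by
  unfold zAR
  refine le_trans (iInf_le _ ⟨0, le_refl _⟩) ?_
  have hc0 : ((0 : Fin m → ℝ) ⬝ᵥ (0 : Fin m → ℝ)) = 0 := by simp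
  rw [hc0]
  rw [EReal.coe_zero, zero_add]
  refine iSup_le ?_
  rintro ⟨h, hh⟩
  obtain ⟨y, hy0, hby, hcy⟩ := badU_witness m hm h hh
  have hmem : 0 ≤ y ∧ h ≤ (0 : Matrix (Fin m) (Fin m) ℝ) *ᵥ (0 : Fin m → ℝ) + badB m *ᵥ y := by
    refine ⟨hy0, ?_⟩
    simpa [Matrix.zero_mulVec] using hby
  have hle := iInf_le (fun _y : {y' : Fin m → ℝ // 0 ≤ y' ∧
      h ≤ (0 : Matrix (Fin m) (Fin m) ℝ) *ᵥ (0 : Fin m → ℝ) + badB m *ᵥ y'} =>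
    (((fun _ : Fin m => (1:ℝ)) ⬝ᵥ (_y : Fin m → ℝ) : ℝ) : EReal)) ⟨y, hmem⟩
  refine le_trans hle ?_
  exact_mod_cast hcy
end

section
/- Let m ≥ 2 be an integer and let θ, μ, λ be real numbers satisfying: λ ≥ 0, θ + λ ≥ 0, μ + λ ≥ 0, λ + ((m−1)/√m)·μ ≥ 0, and (θ + λ) + ((m−1)/√m)·(μ + λ) ≥ 1. Then max{ m·λ, (θ + λ) + (m−1)·(μ + λ), ((m−1)·θ + (m−1)²·μ)/√m + m·λ } ≥ (m−1)/(6√m). -/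
/-!
Write `s = √m` and `B`, `C` for the costs at `e₁` and `ν₁`. These satisfy the identity
`s C + B = m (θ + λ) + m s (λ + (m - 1)/s · μ)`, whose last term is `≥ 0` because `y(ν₁) ≥ 0`, and
`y(e₁) ≥ 0` gives `(m - 1)(μ + λ) ≤ B`. Scaling the feasibility constraint by `m s` and inserting
both bounds gives `m s ≤ (2m + s) · max B C`, hence `max B C ≥ s / 3 ≥ (m - 1) / (6 s)`.
-/

namespace SymmetricAffinePolicy

def costE1 (m θ μ lam : ℝ) : ℝ := (θ + lam) + (m - 1) * (μ + lam)

/-- The cost at `ν₁`, with `s` standing for `√m`. -/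
noncomputable def costNu1 (m s θ μ lam : ℝ) : ℝ := ((m - 1) * θ + (m - 1) ^ 2 * μ) / s + m * lam

variable {m s θ μ lam : ℝ}

theorem mul_sqrt_costNu1_add_costE1 (hs : s ≠ 0) (hsm : s ^ 2 = m) :
    s * costNu1 m s θ μ lam + costE1 m θ μ lam =
      m * (θ + lam) + m * s * (lam + (m - 1) / s * μ) := by
  unfold costNu1 costE1
  field_simp
  rw [← hsm]
  ring

theorem mul_add_le_sqrt_mul_costNu1_add_costE1 (hs : 0 < s) (hsm : s ^ 2 = m)
    (hν : 0 ≤ lam + (m - 1) / s * μ) :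
    m * (θ + lam) ≤ s * costNu1 m s θ μ lam + costE1 m θ μ lam := by
  rw [mul_sqrt_costNu1_add_costE1 hs.ne' hsm]
  have hm : 0 ≤ m := hsm ▸ sq_nonneg s
  have : 0 ≤ m * s * (lam + (m - 1) / s * μ) := by positivity
  linarith

theorem mul_sqrt_le_mul_max_costs (hs : 0 < s) (hsm : s ^ 2 = m)
    (he : 0 ≤ θ + lam) (hν : 0 ≤ lam + (m - 1) / s * μ)
    (hfeas : 1 ≤ (θ + lam) + (m - 1) / s * (μ + lam)) :
    m * s ≤ (2 * m + s) * max (costE1 m θ μ lam) (costNu1 m s θ μ lam) := by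
  have hm : 0 ≤ m := hsm ▸ sq_nonneg s
  have hθ := mul_add_le_sqrt_mul_costNu1_add_costE1 (θ := θ) hs hsm hν
  set B := costE1 m θ μ lam with hB
  set C := costNu1 m s θ μ lam
  have hBC : B ≤ max B C := le_max_left B C
  have hCB : C ≤ max B C := le_max_right B C
  have hμ : (m - 1) * (μ + lam) ≤ B := by rw [hB, costE1]; linarith
  calc m * s
      ≤ m * s * ((θ + lam) + (m - 1) / s * (μ + lam)) :=
        le_mul_of_one_le_right (by positivity) hfeas
    _ = s * (m * (θ + lam)) + m * ((m - 1) * (μ + lam)) := by field_simp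
    _ ≤ s * (s * C + B) + m * B := by gcongr
    _ = m * C + (s + m) * B := by rw [← hsm]; ring
    _ ≤ m * max B C + (s + m) * max B C := by gcongr
    _ = (2 * m + s) * max B C := by ring

theorem sub_one_div_six_mul_le_of_mul_le (hs : 1 ≤ s) (hsm : s ^ 2 = m) {M : ℝ}
    (hM : m * s ≤ (2 * m + s) * M) : (m - 1) / (6 * s) ≤ M := by
  have hs_le : s ≤ m := by nlinarith
  have hM0 : 0 ≤ M := by
    by_contra! h
    nlinarith
  have hM3 : s / 3 ≤ M := by nlinarith
  rw [div_le_iff₀ (by positivity)]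
  nlinarith

end SymmetricAffinePolicy

open SymmetricAffinePolicy in
theorem symmetric_affine_case_analysis_general (m : ℕ) (hm : 2 ≤ m) (θ μ lam : ℝ)
    (h1 : 0 ≤ θ + lam)
    (h3 : 0 ≤ lam + (((m : ℝ) - 1) / Real.sqrt m) * μ)
    (h4 : 1 ≤ (θ + lam) + (((m : ℝ) - 1) / Real.sqrt m) * (μ + lam)) :
    ((m : ℝ) - 1) / (6 * Real.sqrt m) ≤
      max ((m : ℝ) * lam)
        (max ((θ + lam) + ((m : ℝ) - 1) * (μ + lam))
          ((((m : ℝ) - 1) * θ + ((m : ℝ) - 1) ^ 2 * μ) / Real.sqrt m + (m : ℝ) * lam)) := by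
  have hm0 : (0 : ℝ) ≤ m := m.cast_nonneg
  have hsm : Real.sqrt m ^ 2 = m := Real.sq_sqrt hm0
  have hs : 1 ≤ Real.sqrt m := Real.one_le_sqrt.mpr (by exact_mod_cast (by omega : 1 ≤ m))
  refine le_max_of_le_right (sub_one_div_six_mul_le_of_mul_le hs hsm ?_)
  exact mul_sqrt_le_mul_max_costs (by positivity) hsm h1 h3 h4

/-- The arithmetic case analysis behind the lower bound on the value of a
symmetric affine policy for the worst-case instance. -/
theorem symmetric_affine_case_analysis (m : ℕ) (hm : 2 ≤ m) (θ μ lam : ℝ)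
    (h0 : 0 ≤ lam) (h1 : 0 ≤ θ + lam) (h2 : 0 ≤ μ + lam)
    (h3 : 0 ≤ lam + (((m : ℝ) - 1) / Real.sqrt m) * μ)
    (h4 : 1 ≤ (θ + lam) + (((m : ℝ) - 1) / Real.sqrt m) * (μ + lam)) :
    ((m : ℝ) - 1) / (6 * Real.sqrt m) ≤
      max ((m : ℝ) * lam)
        (max ((θ + lam) + ((m : ℝ) - 1) * (μ + lam))
          ((((m : ℝ) - 1) * θ + ((m : ℝ) - 1) ^ 2 * μ) / Real.sqrt m + (m : ℝ) * lam)) :=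
  symmetric_affine_case_analysis_general m hm θ μ lam h1 h3 h4
end

section
/- Let m ≥ 2, n ≥ 1, b > 0, μ ∈ (0, b], d̄ > 0, and let the entries B̃_ji (j ∈ [m], i ∈ [n]) of a random m×n matrix be i.i.d. real random variables taking values in [0, b] with mean μ. Set τ := b·√((log m)/n) and assume μ > τ. Then with probability at least 1 − 1/m, every w ∈ ℝ^m with w ≥ 0 and B̃ᵀw ≤ d̄·e (componentwise, e the all-ones vector of ℝ^n) satisfies Σ_{j=1}^m w_j ≤ d̄/(μ − τ). -/
open Matrix MeasureTheory ProbabilityTheory Real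

/-!
By Hoeffding's inequality, the `j`-th row sum of `B̃` falls to `n (μ - τ)` or below with
probability at most `exp (-2 n τ² / b²) = 1 / m²`, so by the union bound all row sums exceed
`n (μ - τ)` with probability at least `1 - 1 / m`. On that event, summing the constraints
`B̃ᵀ w ≤ d̄ e` over the `n` columns gives `n (μ - τ) Σⱼ wⱼ ≤ Σⱼ wⱼ Σᵢ B̃ⱼᵢ ≤ n d̄`.
-/

theorem measureReal_sum_le_le_of_iIndepFun_of_mem_Icc {Ω ι : Type*} [MeasurableSpace Ω]
    {Pr : Measure Ω} [IsProbabilityMeasure Pr] [Fintype ι] {X : ι → Ω → ℝ}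
    (hindep : iIndepFun X Pr) (hmeas : ∀ i, AEMeasurable (X i) Pr) {a b μ : ℝ}
    (hbdd : ∀ i, ∀ᵐ ω ∂Pr, X i ω ∈ Set.Icc a b) (hmean : ∀ i, Pr[X i] = μ)
    {t : ℝ} (ht : 0 ≤ t) :
    Pr.real {ω | ∑ i, X i ω ≤ Fintype.card ι * (μ - t)} ≤
      exp (-2 * Fintype.card ι * t ^ 2 / (b - a) ^ 2) := by
  have hsubG : ∀ i ∈ Finset.univ,
      HasSubgaussianMGF (fun ω ↦ μ - X i ω) ((‖b - a‖₊ / 2) ^ 2) Pr := by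
    intro i _
    convert (hasSubgaussianMGF_of_mem_Icc (hmeas i) (hbdd i)).neg using 1
    ext ω
    simp [hmean i]
  have hindep' : iIndepFun (fun i ω ↦ μ - X i ω) Pr :=
    hindep.comp (fun _ x ↦ μ - x) fun _ ↦ by fun_prop
  have hevent : {ω | ∑ i, X i ω ≤ Fintype.card ι * (μ - t)} =
      {ω | Fintype.card ι * t ≤ ∑ i, (μ - X i ω)} := by
    ext ω
    simp only [Set.mem_ofPred_eq, Finset.sum_sub_distrib, Finset.sum_const, Finset.card_univ,
      nsmul_eq_mul]
    constructor <;> intro h <;> linarith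
  rw [hevent]
  refine (HasSubgaussianMGF.measure_sum_ge_le_of_iIndepFun hindep' hsubG
    (by positivity)).trans_eq ?_
  congr 1
  rcases eq_or_ne (Fintype.card ι : ℝ) 0 with h | h
  · simp [h]
  · simp only [Finset.sum_const, Finset.card_univ, nsmul_eq_mul]
    push_cast
    rw [Real.norm_eq_abs, div_pow, sq_abs]
    field_simp

theorem ofReal_one_sub_le_measure_compl_iUnion {Ω ι : Type*} [MeasurableSpace Ω]
    {Pr : Measure Ω} [IsProbabilityMeasure Pr] [Fintype ι] {E : ι → Set Ω}
    (hE : ∀ j, MeasurableSet (E j))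
    {δ : ℝ} (hδ : ∀ j, Pr.real (E j) ≤ δ) :
    ENNReal.ofReal (1 - Fintype.card ι * δ) ≤ Pr (⋃ j, E j)ᶜ := by
  have hunion : Pr.real (⋃ j, E j) ≤ Fintype.card ι * δ := by
    calc Pr.real (⋃ j, E j) ≤ ∑ j, Pr.real (E j) := measureReal_iUnion_fintype_le E
      _ ≤ ∑ _j : ι, δ := Finset.sum_le_sum fun j _ ↦ hδ j
      _ = Fintype.card ι * δ := by simp
  rw [← ofReal_measureReal, probReal_compl_eq_one_sub (MeasurableSet.iUnion hE)]
  exact ENNReal.ofReal_le_ofReal (by linarith)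

theorem sum_le_div_of_transpose_mulVec_le {ι κ : Type*} [Fintype ι] [Fintype κ] [Nonempty κ]
    {B : Matrix ι κ ℝ} {c d : ℝ} (hc : 0 < c)
    (hrow : ∀ j, Fintype.card κ * c ≤ ∑ i, B j i)
    {w : ι → ℝ} (hw : 0 ≤ w) (hBw : Bᵀ *ᵥ w ≤ fun _ ↦ d) :
    ∑ j, w j ≤ d / c := by
  have hκ : (0 : ℝ) < Fintype.card κ := by exact_mod_cast Fintype.card_pos
  have hsum : Fintype.card κ * (c * ∑ j, w j) ≤ Fintype.card κ * d :=
    calc Fintype.card κ * (c * ∑ j, w j) = ∑ j, w j * (Fintype.card κ * c) := by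
          rw [Finset.mul_sum, Finset.mul_sum]; exact Finset.sum_congr rfl fun _ _ ↦ by ring
      _ ≤ ∑ j, w j * ∑ i, B j i :=
          Finset.sum_le_sum fun j _ ↦ mul_le_mul_of_nonneg_left (hrow j) (hw j)
      _ = ∑ i, (Bᵀ *ᵥ w) i := by
          simp only [mulVec, dotProduct, transpose_apply, Finset.mul_sum]
          rw [Finset.sum_comm]
          exact Finset.sum_congr rfl fun _ _ ↦ Finset.sum_congr rfl fun _ _ ↦ by ring
      _ ≤ ∑ _i : κ, d := Finset.sum_le_sum fun i _ ↦ hBw i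
      _ = Fintype.card κ * d := by simp
  rw [le_div_iff₀ hc, mul_comm]
  exact le_of_mul_le_mul_left hsum hκ

theorem dual_set_in_simplex_bounded_general (m n : ℕ) (hm : 2 ≤ m) (hn : 1 ≤ n)
    (b μ dbar : ℝ) (hb : 0 < b)
    (τ : ℝ) (hτ : τ = b * Real.sqrt (Real.log m / n)) (hμτ : τ < μ)
    {Ω : Type} [MeasurableSpace Ω] (Pr : Measure Ω) [IsProbabilityMeasure Pr]
    (Bt : Fin m → Fin n → Ω → ℝ)
    (hmeas : ∀ j i, Measurable (Bt j i))
    (hindep : iIndepFun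
      (fun p : Fin m × Fin n => Bt p.1 p.2) Pr)
    (hbdd : ∀ j i ω, Bt j i ω ∈ Set.Icc (0 : ℝ) b)
    (hmean : ∀ j i, ∫ ω, Bt j i ω ∂Pr = μ) :
    ENNReal.ofReal (1 - 1 / m) ≤
      Pr {ω | ∀ w : Fin m → ℝ, 0 ≤ w →
          (Matrix.of fun j i => Bt j i ω)ᵀ *ᵥ w ≤ (fun _ => dbar) →
          ∑ j, w j ≤ dbar / (μ - τ)} := by
  have hm1 : (1 : ℝ) ≤ m := by exact_mod_cast one_le_two.trans hm
  have hn0 : (0 : ℝ) < n := by exact_mod_cast hn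
  have : Nonempty (Fin n) := Fin.pos_iff_nonempty.mp hn
  have hτ0 : 0 ≤ τ := hτ ▸ by positivity
  have hexp : exp (-2 * n * τ ^ 2 / (b - 0) ^ 2) = ((m : ℝ) ^ 2)⁻¹ := by
    rw [hτ, sub_zero, mul_pow, sq_sqrt (div_nonneg (log_nonneg hm1) hn0.le),
      show -2 * n * (b ^ 2 * (log m / n)) / b ^ 2 = -log ((m : ℝ) ^ 2) by
        rw [log_pow]; field_simp; push_cast; ring,
      exp_neg, exp_log (by positivity)]
  set bad : Fin m → Set Ω := fun j ↦ {ω | ∑ i, Bt j i ω ≤ n * (μ - τ)}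
  have hbad : ∀ j, Pr.real (bad j) ≤ ((m : ℝ) ^ 2)⁻¹ := fun j ↦ by
    have hoeffding := measureReal_sum_le_le_of_iIndepFun_of_mem_Icc
      (hindep.precomp (Prod.mk_right_injective j)) (fun i ↦ (hmeas j i).aemeasurable)
      (fun i ↦ ae_of_all _ (hbdd j i)) (hmean j) hτ0
    rwa [Fintype.card_fin, hexp] at hoeffding
  calc ENNReal.ofReal (1 - 1 / m)
        = ENNReal.ofReal (1 - Fintype.card (Fin m) * ((m : ℝ) ^ 2)⁻¹) := by
        congr 2; simp; field_simp
    _ ≤ Pr (⋃ j, bad j)ᶜ := ofReal_one_sub_le_measure_compl_iUnion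
        (fun j ↦ measurableSet_le (by fun_prop) (by fun_prop)) hbad
    _ ≤ _ := measure_mono ?_
  intro ω hω w hw hBw
  simp only [bad, Set.mem_compl_iff, Set.mem_iUnion, not_exists, Set.mem_ofPred_eq, not_le] at hω
  exact sum_le_div_of_transpose_mulVec_le (sub_pos.2 hμτ) (fun j ↦ by simpa using (hω j).le)
    hw hBw

/-- For i.i.d. entries in `[0,b]` with mean `μ`, with probability at least
`1 - 1/m` the dualized uncertainty set `{w ≥ 0 : B̃ᵀw ≤ d̄e}` is contained in the scaled
simplex `{w ≥ 0 : Σⱼ wⱼ ≤ d̄/(μ-τ)}` with `τ = b√(log m / n)`. -/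
theorem dual_set_in_simplex_bounded (m n : ℕ) (hm : 2 ≤ m) (hn : 1 ≤ n)
    (b μ dbar : ℝ) (hb : 0 < b) (hμ0 : 0 < μ) (hμb : μ ≤ b) (hdbar : 0 < dbar)
    (τ : ℝ) (hτ : τ = b * Real.sqrt (Real.log m / n)) (hμτ : τ < μ)
    {Ω : Type} [MeasurableSpace Ω] (Pr : Measure Ω) [IsProbabilityMeasure Pr]
    (Bt : Fin m → Fin n → Ω → ℝ)
    (hmeas : ∀ j i, Measurable (Bt j i))
    (hindep : iIndepFun
      (fun p : Fin m × Fin n => Bt p.1 p.2) Pr)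
    (hident : ∀ j i j' i', IdentDistrib (Bt j i) (Bt j' i') Pr Pr)
    (hbdd : ∀ j i ω, Bt j i ω ∈ Set.Icc (0 : ℝ) b)
    (hmean : ∀ j i, ∫ ω, Bt j i ω ∂Pr = μ) :
    ENNReal.ofReal (1 - 1 / m) ≤
      Pr {ω | ∀ w : Fin m → ℝ, 0 ≤ w →
          (Matrix.of fun j i => Bt j i ω)ᵀ *ᵥ w ≤ (fun _ => dbar) →
          ∑ j, w j ≤ dbar / (μ - τ)} :=
  dual_set_in_simplex_bounded_general m n hm hn b μ dbar hb τ hτ hμτ Pr Bt hmeas hindep hbdd hmean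
end
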